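/- arXiv:2605.30830 — 6 statements merged into one kernel-verified Lean document; each statement's English description precedes it below -/
import Mathlib

section
/- Let G be the graph obtained from K_n by removing a matching of m edges (1 ≤ m ≤ ⌊n/2⌋, n ≥ 5). For any two adjacent vertices x, y of G, the Ollivier–Ricci curvature satisfies κ(x,y) = #(x,y)/(d_x ∨ d_y), where #(x,y) is the number of triangles containing the edge (x,y) and d_x ∨ d_y is the maximum of the degrees. Explicitly, κ(x,y) = (n−2)/(n−1) if d_x = d_y = n−1; κ(x,y) = (n−3)/(n−1) if {d_x, d_y} = {n−1, n−2}; and κ(x,y) = (n−4)/(n−2) if d_x = d_y = n−2. -/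
open Finset
open scoped Classical

section OllivierRicciDefs

variable {V : Type*} [Fintype V]

/-- A coupling between two (finitely supported) measures on `V`. -/
def IsCoupling (μ ν : V → ℝ) (A : V → V → ℝ) : Prop :=
  (∀ u v, 0 ≤ A u v) ∧ (∀ u, ∑ v, A u v = μ u) ∧ (∀ v, ∑ u, A u v = ν v)

/-- The degree of a vertex. -/
noncomputable def graphDeg (G : SimpleGraph V) (x : V) : ℕ :=
  (G.neighborSet x).ncard

/-- The uniform probability measure on the neighborhood of `x`. -/
noncomputable def vertexMeasure (G : SimpleGraph V) (x : V) : V → ℝ :=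
  fun v => if G.Adj x v then (1 : ℝ) / (graphDeg G x : ℝ) else 0

/-- The 1-Wasserstein distance between two measures, w.r.t. the graph distance. -/
noncomputable def wassersteinDist (G : SimpleGraph V) (μ ν : V → ℝ) : ℝ :=
  sInf {c : ℝ | ∃ A : V → V → ℝ, IsCoupling μ ν A ∧
    c = ∑ u : V, ∑ v : V, A u v * (G.dist u v : ℝ)}

/-- The Ollivier–Ricci curvature of a pair of vertices. -/
noncomputable def ricciCurv (G : SimpleGraph V) (x y : V) : ℝ :=
  1 - wassersteinDist G (vertexMeasure G x) (vertexMeasure G y) / (G.dist x y : ℝ)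

/-- The number of triangles containing the edge `(x, y)`, i.e. the number of
common neighbors of `x` and `y`. -/
noncomputable def triCount (G : SimpleGraph V) (x y : V) : ℕ :=
  (G.neighborSet x ∩ G.neighborSet y).ncard

/-- A finite set of unordered pairs forms a matching: no loops, and the
edges are pairwise vertex-disjoint. -/
def IsMatchingSet {α : Type*} (M : Finset (Sym2 α)) : Prop :=
  (∀ e ∈ M, ¬ e.IsDiag) ∧
  (M : Set (Sym2 α)).Pairwise (fun e f => ∀ x, x ∈ e → x ∉ f)

end OllivierRicciDefs

section Wass
variable {V : Type*} [Fintype V]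

lemma wass_eq_of (G : SimpleGraph V) (μ ν : V → ℝ) (c : ℝ)
    (A : V → V → ℝ) (hA : IsCoupling μ ν A)
    (hcost : ∑ u : V, ∑ v : V, A u v * (G.dist u v : ℝ) = c)
    (f : V → ℝ) (hf : ∀ u v, f u - f v ≤ (G.dist u v : ℝ))
    (hval : (∑ u : V, μ u * f u) - (∑ v : V, ν v * f v) = c) :
    wassersteinDist G μ ν = c := by
  have hmem : c ∈ {c : ℝ | ∃ A : V → V → ℝ, IsCoupling μ ν A ∧
      c = ∑ u : V, ∑ v : V, A u v * (G.dist u v : ℝ)} := ⟨A, hA, hcost.symm⟩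
  have hlb : ∀ b ∈ {c : ℝ | ∃ A : V → V → ℝ, IsCoupling μ ν A ∧
      c = ∑ u : V, ∑ v : V, A u v * (G.dist u v : ℝ)}, c ≤ b := by
    rintro b ⟨B, ⟨hB0, hBr, hBc⟩, rfl⟩
    calc c = (∑ u : V, μ u * f u) - (∑ v : V, ν v * f v) := hval.symm
      _ = ∑ u : V, ∑ v : V, B u v * (f u - f v) := by
          have h1 : ∑ u : V, μ u * f u = ∑ u : V, ∑ v : V, B u v * f u := by
            refine Finset.sum_congr rfl fun u _ => ?_
            rw [← Finset.sum_mul, hBr u]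
          have h2 : ∑ v : V, ν v * f v = ∑ u : V, ∑ v : V, B u v * f v := by
            rw [Finset.sum_comm]
            refine Finset.sum_congr rfl fun v _ => ?_
            rw [← Finset.sum_mul, hBc v]
          rw [h1, h2, ← Finset.sum_sub_distrib]
          refine Finset.sum_congr rfl fun u _ => ?_
          rw [← Finset.sum_sub_distrib]
          exact Finset.sum_congr rfl fun v _ => by ring
      _ ≤ ∑ u : V, ∑ v : V, B u v * (G.dist u v : ℝ) := by
          refine Finset.sum_le_sum fun u _ => Finset.sum_le_sum fun v _ => ?_
          exact mul_le_mul_of_nonneg_left (hf u v) (hB0 u v)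
  exact le_antisymm (csInf_le ⟨c, hlb⟩ hmem) (le_csInf ⟨c, hmem⟩ hlb)


lemma min_eq_right_of_lt_left {a b : ℝ} (h : min a b < a) : min a b = b := by
  rcases min_cases a b with ⟨h1, _⟩ | ⟨h1, _⟩
  · rw [h1] at h; exact absurd h (lt_irrefl a)
  · exact h1

lemma surplus_mul_eq_zero (a b : ℝ) : (a - min a b) * (b - min a b) = 0 := by
  rcases min_cases a b with ⟨h1, _⟩ | ⟨h1, _⟩ <;> rw [h1] <;> ring

lemma wass_formula (G : SimpleGraph V) (μ ν : V → ℝ)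
    (hμ0 : ∀ u, 0 ≤ μ u) (hν0 : ∀ u, 0 ≤ ν u)
    (hsum : ∑ u : V, μ u = ∑ u : V, ν u)
    (hdist1 : ∀ u v : V, u ≠ v → 1 ≤ G.dist u v)
    (hadj : ∀ u v : V, min (μ u) (ν u) < μ u → min (μ v) (ν v) < ν v →
      G.dist u v = 1)
    (hr : 0 < ∑ u : V, (μ u - min (μ u) (ν u))) :
    wassersteinDist G μ ν = ∑ u : V, (μ u - min (μ u) (ν u)) := by
  have hsμ0 : ∀ u, 0 ≤ μ u - min (μ u) (ν u) := fun u => by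
    have := min_le_left (μ u) (ν u); linarith
  have hsν0 : ∀ u, 0 ≤ ν u - min (μ u) (ν u) := fun u => by
    have := min_le_right (μ u) (ν u); linarith
  have hsνsum : ∑ u : V, (ν u - min (μ u) (ν u)) = ∑ u : V, (μ u - min (μ u) (ν u)) := by
    simp only [Finset.sum_sub_distrib, hsum]
  refine wass_eq_of G μ ν _
    (fun u v => (if u = v then min (μ u) (ν u) else 0) +
      (μ u - min (μ u) (ν u)) * (ν v - min (μ v) (ν v)) / (∑ w : V, (μ w - min (μ w) (ν w))))
    ⟨fun u v => ?_, fun u => ?_, fun v => ?_⟩ ?_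
    (fun u => if min (μ u) (ν u) < μ u then (1:ℝ) else 0) (fun u v => ?_) ?_
  · have h1 : 0 ≤ min (μ u) (ν u) := le_min (hμ0 u) (hν0 u)
    have h2 : (0:ℝ) ≤ if u = v then min (μ u) (ν u) else 0 := by positivity
    have h3 : 0 ≤ (μ u - min (μ u) (ν u)) * (ν v - min (μ v) (ν v)) /
        (∑ w : V, (μ w - min (μ w) (ν w))) :=
      div_nonneg (mul_nonneg (hsμ0 u) (hsν0 v)) hr.le
    linarith
  · rw [Finset.sum_add_distrib, Finset.sum_ite_eq, if_pos (Finset.mem_univ u),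
      ← Finset.sum_div, ← Finset.mul_sum, hsνsum, mul_div_assoc, div_self hr.ne',
      mul_one]
    ring
  · rw [Finset.sum_add_distrib, Finset.sum_ite_eq', if_pos (Finset.mem_univ v),
      ← Finset.sum_div, ← Finset.sum_mul, mul_comm, mul_div_assoc, div_self hr.ne',
      mul_one]
    ring
  · have key : ∀ u v : V, ((if u = v then min (μ u) (ν u) else 0) +
        (μ u - min (μ u) (ν u)) * (ν v - min (μ v) (ν v)) /
          (∑ w : V, (μ w - min (μ w) (ν w)))) * (G.dist u v : ℝ) =
        (μ u - min (μ u) (ν u)) * (ν v - min (μ v) (ν v)) /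
          (∑ w : V, (μ w - min (μ w) (ν w))) := by
      intro u v
      rcases eq_or_ne u v with rfl | huv
      · rw [SimpleGraph.dist_self]
        have := surplus_mul_eq_zero (μ u) (ν u)
        push_cast
        rw [this]
        ring
      · rcases eq_or_lt_of_le (min_le_left (μ u) (ν u)) with hu | hu
        · have h0 : μ u - min (μ u) (ν u) = 0 := by rw [hu]; ring
          rw [if_neg huv, h0]; ring
        · rcases eq_or_lt_of_le (min_le_right (μ v) (ν v)) with hv | hv
          · have h0 : ν v - min (μ v) (ν v) = 0 := by rw [hv]; ring
            rw [if_neg huv, h0]; ring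
          · rw [hadj u v hu hv, if_neg huv]
            push_cast
            ring
    rw [Finset.sum_congr rfl fun u _ => Finset.sum_congr rfl fun v _ => key u v]
    simp only [← Finset.sum_div, ← Finset.mul_sum, hsνsum]
    rw [← Finset.sum_mul, mul_div_assoc, div_self hr.ne', mul_one]
  · have hd0 : (0:ℝ) ≤ (G.dist u v : ℝ) := by positivity
    split_ifs with h1 h2 h2
    · linarith
    · rcases eq_or_ne u v with rfl | huv
      · exact absurd h1 h2
      · have h3 := hdist1 u v huv
        have h4 : (1:ℝ) ≤ (G.dist u v : ℝ) := by exact_mod_cast h3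
        linarith
    · linarith
    · linarith
  · rw [← Finset.sum_sub_distrib]
    refine Finset.sum_congr rfl fun u _ => ?_
    rcases eq_or_lt_of_le (min_le_left (μ u) (ν u)) with hu | hu
    · rw [if_neg (by rw [hu]; exact lt_irrefl _), hu]
      ring
    · rw [if_pos hu, min_eq_right_of_lt_left hu]
      ring
end Wass

section Aux
variable {n : ℕ} {M : Finset (Sym2 (Fin n))} {G : SimpleGraph (Fin n)}

lemma adj_iff' (hG : G = ⊤ \ SimpleGraph.fromEdgeSet ↑M) (u v : Fin n) :
    G.Adj u v ↔ u ≠ v ∧ s(u, v) ∉ M := by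
  subst hG
  simp only [SimpleGraph.sdiff_adj, SimpleGraph.top_adj, SimpleGraph.fromEdgeSet_adj,
    Finset.mem_coe]
  tauto

lemma partner_uniq (hM : IsMatchingSet M) {u a b : Fin n}
    (ha : s(u, a) ∈ M) (hb : s(u, b) ∈ M) : a = b := by
  by_contra hab
  rcases eq_or_ne (s(u, a)) (s(u, b)) with he | he
  · rw [Sym2.eq_iff] at he
    rcases he with ⟨_, h2⟩ | ⟨h1, h2⟩
    · exact hab h2
    · exact hab (h2.trans h1)
  · exact hM.2 ha hb he u (by simp) (by simp)

lemma partner_ne (hM : IsMatchingSet M) {u w : Fin n} (h : s(u, w) ∈ M) : w ≠ u := by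
  intro he
  exact hM.1 _ h (by simp [he])

lemma nbhd_unmatched (hG : G = ⊤ \ SimpleGraph.fromEdgeSet ↑M) {u : Fin n}
    (hu : ∀ w, s(u, w) ∉ M) : G.neighborSet u = {u}ᶜ := by
  ext v
  simp [SimpleGraph.mem_neighborSet, adj_iff' hG, hu v, eq_comm]

lemma nbhd_matched (hG : G = ⊤ \ SimpleGraph.fromEdgeSet ↑M) (hM : IsMatchingSet M)
    {u u' : Fin n} (hu : s(u, u') ∈ M) : G.neighborSet u = {u, u'}ᶜ := by
  ext v
  simp only [SimpleGraph.mem_neighborSet, adj_iff' hG, Set.mem_compl_iff,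
    Set.mem_insert_iff, Set.mem_singleton_iff, not_or]
  constructor
  · rintro ⟨h1, h2⟩
    refine ⟨fun hv => h1 hv.symm, fun hv => h2 (by rw [hv]; exact hu)⟩
  · rintro ⟨h1, h2⟩
    refine ⟨fun hv => h1 hv.symm, fun hv => h2 (partner_uniq hM hv hu)⟩

lemma ncard_compl_eq (s : Set (Fin n)) : sᶜ.ncard = n - s.ncard := by
  have h := Set.ncard_add_ncard_compl s
  rw [Nat.card_eq_fintype_card, Fintype.card_fin] at h
  omega

lemma deg_unmatched (hG : G = ⊤ \ SimpleGraph.fromEdgeSet ↑M) {u : Fin n}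
    (hu : ∀ w, s(u, w) ∉ M) : graphDeg G u = n - 1 := by
  rw [graphDeg, nbhd_unmatched hG hu, ncard_compl_eq, Set.ncard_singleton]

lemma deg_matched (hG : G = ⊤ \ SimpleGraph.fromEdgeSet ↑M) (hM : IsMatchingSet M)
    {u u' : Fin n} (hu : s(u, u') ∈ M) : graphDeg G u = n - 2 := by
  rw [graphDeg, nbhd_matched hG hM hu, ncard_compl_eq,
    Set.ncard_pair (partner_ne hM hu).symm]

lemma exists_third (hn : 5 ≤ n) (u v : Fin n) : ∃ z : Fin n, z ≠ u ∧ z ≠ v := by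
  by_contra h
  push_neg at h
  have hsub : (Finset.univ : Finset (Fin n)) ⊆ {u, v} := by
    intro z _
    rcases eq_or_ne z u with rfl | hz
    · simp
    · simp [h z hz]
  have := Finset.card_le_card hsub
  rw [Finset.card_univ, Fintype.card_fin] at this
  have h2 : ({u, v} : Finset (Fin n)).card ≤ 2 := Finset.card_insert_le _ _ |>.trans (by simp)
  omega

lemma reach_all (hG : G = ⊤ \ SimpleGraph.fromEdgeSet ↑M) (hM : IsMatchingSet M)
    (hn : 5 ≤ n) (u v : Fin n) : G.Reachable u v := by
  rcases eq_or_ne u v with rfl | huv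
  · exact SimpleGraph.Reachable.refl u
  by_cases hadj : G.Adj u v
  · exact hadj.reachable
  · have hmem : s(u, v) ∈ M := by
      by_contra h
      exact hadj ((adj_iff' hG u v).mpr ⟨huv, h⟩)
    obtain ⟨z, hzu, hzv⟩ := exists_third hn u v
    have h1 : G.Adj u z := by
      rw [adj_iff' hG]
      refine ⟨hzu.symm, fun h => hzv (partner_uniq hM h hmem)⟩
    have h2 : G.Adj z v := by
      rw [adj_iff' hG]
      refine ⟨hzv, fun h => ?_⟩
      have h' : s(v, z) ∈ M := by rw [Sym2.eq_swap]; exact h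
      have hvu : s(v, u) ∈ M := by rw [Sym2.eq_swap]; exact hmem
      exact hzu (partner_uniq hM h' hvu)
    exact (h1.reachable).trans h2.reachable

lemma dist_ge_one (hG : G = ⊤ \ SimpleGraph.fromEdgeSet ↑M) (hM : IsMatchingSet M)
    (hn : 5 ≤ n) {u v : Fin n} (huv : u ≠ v) : 1 ≤ G.dist u v :=
  (reach_all hG hM hn u v).pos_dist_of_ne huv

lemma sum_ite_compl1 (x : Fin n) (c : ℝ) :
    ∑ v : Fin n, (if v = x then 0 else c) = n * c - c := by
  have h : ∀ v : Fin n, (if v = x then (0:ℝ) else c) = c - (if v = x then c else 0) := by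
    intro v; split <;> ring
  rw [Finset.sum_congr rfl fun v _ => h v, Finset.sum_sub_distrib, Finset.sum_const,
    Finset.sum_ite_eq', if_pos (Finset.mem_univ x), Finset.card_univ, Fintype.card_fin,
    nsmul_eq_mul]

lemma sum_ite_compl2 {x y : Fin n} (hxy : x ≠ y) (c : ℝ) :
    ∑ v : Fin n, (if v = x ∨ v = y then 0 else c) = n * c - 2 * c := by
  have h : ∀ v : Fin n, (if v = x ∨ v = y then (0:ℝ) else c) =
      c - (if v = x then c else 0) - (if v = y then c else 0) := by
    intro v
    rcases eq_or_ne v x with rfl | h1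
    · rw [if_pos (Or.inl rfl), if_pos rfl, if_neg hxy]; ring
    · rcases eq_or_ne v y with rfl | h2
      · rw [if_pos (Or.inr rfl), if_neg h1, if_pos rfl]; ring
      · rw [if_neg (by tauto), if_neg h1, if_neg h2]; ring
  rw [Finset.sum_congr rfl fun v _ => h v]
  rw [Finset.sum_sub_distrib, Finset.sum_sub_distrib, Finset.sum_const,
    Finset.sum_ite_eq', Finset.sum_ite_eq', if_pos (Finset.mem_univ x),
    if_pos (Finset.mem_univ y), Finset.card_univ, Fintype.card_fin, nsmul_eq_mul]
  ring
lemma meas_nonneg (G : SimpleGraph (Fin n)) (u w : Fin n) : 0 ≤ vertexMeasure G u w := by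
  rw [vertexMeasure]
  split
  · positivity
  · exact le_refl 0

lemma meas_unmatched (hG : G = ⊤ \ SimpleGraph.fromEdgeSet ↑M) (hn : 5 ≤ n)
    {u : Fin n} (hu : ∀ w, s(u, w) ∉ M) :
    vertexMeasure G u = fun v => if v = u then 0 else 1 / ((n : ℝ) - 1) := by
  have hd : graphDeg G u = n - 1 := deg_unmatched hG hu
  have hc : ((n - 1 : ℕ) : ℝ) = (n : ℝ) - 1 := by
    rw [Nat.cast_sub (by omega)]; norm_num
  have hadj : ∀ v, G.Adj u v ↔ v ≠ u := by
    intro v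
    rw [← SimpleGraph.mem_neighborSet, nbhd_unmatched hG hu]
    simp
  funext v
  rw [vertexMeasure, hd, hc]
  rcases eq_or_ne v u with rfl | h
  · rw [if_neg (by rw [hadj]; simp), if_pos rfl]
  · rw [if_pos ((hadj v).mpr h), if_neg h]

lemma meas_matched (hG : G = ⊤ \ SimpleGraph.fromEdgeSet ↑M) (hM : IsMatchingSet M)
    (hn : 5 ≤ n) {u u' : Fin n} (hu : s(u, u') ∈ M) :
    vertexMeasure G u = fun v => if v = u ∨ v = u' then 0 else 1 / ((n : ℝ) - 2) := by
  have hd : graphDeg G u = n - 2 := deg_matched hG hM hu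
  have hc : ((n - 2 : ℕ) : ℝ) = (n : ℝ) - 2 := by
    rw [Nat.cast_sub (by omega)]; norm_num
  have hadj : ∀ v, G.Adj u v ↔ ¬(v = u ∨ v = u') := by
    intro v
    rw [← SimpleGraph.mem_neighborSet, nbhd_matched hG hM hu]
    simp [not_or]
  funext v
  rw [vertexMeasure, hd, hc]
  by_cases h : v = u ∨ v = u'
  · rw [if_neg (by rw [hadj]; exact not_not_intro h), if_pos h]
  · rw [if_pos ((hadj v).mpr h), if_neg h]

lemma partners_ne (hM : IsMatchingSet M) {x x' y y' : Fin n}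
    (hx' : s(x, x') ∈ M) (hy' : s(y, y') ∈ M) (hxy : x ≠ y) : x' ≠ y' := by
  intro he
  subst he
  rcases eq_or_ne (s(x, x')) (s(y, x')) with h | h
  · rw [Sym2.eq_iff] at h
    rcases h with ⟨h1, _⟩ | ⟨h1, h2⟩
    · exact hxy h1
    · exact (partner_ne hM hx') (h1.symm)
  · exact hM.2 hx' hy' h x' (by simp) (by simp)

lemma sumA (hn : 5 ≤ n) (x : Fin n) :
    ∑ v : Fin n, (if v = x then (0:ℝ) else 1 / ((n : ℝ) - 1)) = 1 := by
  rw [sum_ite_compl1]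
  have h1 : (n : ℝ) - 1 ≠ 0 := by
    have : (5:ℝ) ≤ (n:ℝ) := by exact_mod_cast hn
    linarith
  field_simp

lemma sumB (hn : 5 ≤ n) {x y : Fin n} (hxy : x ≠ y) :
    ∑ v : Fin n, (if v = x ∨ v = y then (0:ℝ) else 1 / ((n : ℝ) - 2)) = 1 := by
  rw [sum_ite_compl2 hxy]
  have h1 : (n : ℝ) - 2 ≠ 0 := by
    have : (5:ℝ) ≤ (n:ℝ) := by exact_mod_cast hn
    linarith
  field_simp
end Aux
theorem stmt3 (n m : ℕ) (hn : 5 ≤ n) (hm1 : 1 ≤ m) (hm2 : m ≤ n / 2)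
    (M : Finset (Sym2 (Fin n))) (hM : IsMatchingSet M) (hMcard : M.card = m)
    (G : SimpleGraph (Fin n)) (hG : G = ⊤ \ SimpleGraph.fromEdgeSet ↑M)
    (x y : Fin n) (hxy : G.Adj x y) :
    ricciCurv G x y =
      (triCount G x y : ℝ) / (max (graphDeg G x) (graphDeg G y) : ℝ) ∧
    ((graphDeg G x = n - 1 ∧ graphDeg G y = n - 1) →
      ricciCurv G x y = ((n : ℝ) - 2) / ((n : ℝ) - 1)) ∧
    ((graphDeg G x = n - 1 ∧ graphDeg G y = n - 2) →
      ricciCurv G x y = ((n : ℝ) - 3) / ((n : ℝ) - 1)) ∧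
    ((graphDeg G x = n - 2 ∧ graphDeg G y = n - 2) →
      ricciCurv G x y = ((n : ℝ) - 4) / ((n : ℝ) - 2)) := by
  have hne : x ≠ y := hxy.ne
  have hsxy : s(x, y) ∉ M := ((adj_iff' hG x y).mp hxy).2
  have hdxy : G.dist x y = 1 := SimpleGraph.dist_eq_one_iff_adj.mpr hxy
  have hric0 : ricciCurv G x y =
      1 - wassersteinDist G (vertexMeasure G x) (vertexMeasure G y) := by
    rw [ricciCurv, hdxy]; norm_num
  have hnR : (5:ℝ) ≤ (n:ℝ) := by exact_mod_cast hn
  have h1pos : (0:ℝ) < (n:ℝ) - 1 := by linarith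
  have h2pos : (0:ℝ) < (n:ℝ) - 2 := by linarith
  have h1ne : ((n:ℝ) - 1) ≠ 0 := h1pos.ne'
  have h2ne : ((n:ℝ) - 2) ≠ 0 := h2pos.ne'
  have d1pos : (0:ℝ) < 1 / ((n:ℝ) - 1) := by positivity
  have d2pos : (0:ℝ) < 1 / ((n:ℝ) - 2) := by positivity
  have d12 : 1 / ((n:ℝ) - 1) ≤ 1 / ((n:ℝ) - 2) :=
    one_div_le_one_div_of_le h2pos (by linarith)
  have hc1 : ((n - 1 : ℕ) : ℝ) = (n : ℝ) - 1 := by rw [Nat.cast_sub (by omega)]; norm_num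
  have hc2 : ((n - 2 : ℕ) : ℝ) = (n : ℝ) - 2 := by rw [Nat.cast_sub (by omega)]; norm_num
  have hc3 : ((n - 3 : ℕ) : ℝ) = (n : ℝ) - 3 := by rw [Nat.cast_sub (by omega)]; norm_num
  have hc4 : ((n - 4 : ℕ) : ℝ) = (n : ℝ) - 4 := by rw [Nat.cast_sub (by omega)]; norm_num
  have hdg1 := dist_ge_one hG hM hn (G := G) (u := x) (v := y)
  by_cases hxM : ∃ x', s(x, x') ∈ M
  · obtain ⟨x', hx'⟩ := hxM
    have hx'x : x' ≠ x := partner_ne hM hx'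
    have hyx' : y ≠ x' := by
      intro he
      apply hsxy
      rw [he]; exact hx'
    by_cases hyM : ∃ y', s(y, y') ∈ M
    · -- Case 3 : both matched
      obtain ⟨y', hy'⟩ := hyM
      have hy'y : y' ≠ y := partner_ne hM hy'
      have hxy' : x ≠ y' := by
        intro he
        apply hsxy
        rw [Sym2.eq_swap, he]; exact hy'
      have hx'y' : x' ≠ y' := partners_ne hM hx' hy' hne
      have hμ := meas_matched hG hM hn hx'
      have hν := meas_matched hG hM hn hy'
      have hdx : graphDeg G x = n - 2 := deg_matched hG hM hx'
      have hdy : graphDeg G y = n - 2 := deg_matched hG hM hy'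
      have htri : triCount G x y = n - 4 := by
        rw [triCount, nbhd_matched hG hM hx', nbhd_matched hG hM hy',
          ← Set.compl_union, ncard_compl_eq]
        have h4 : ({x, x'} ∪ {y, y'} : Set (Fin n)).ncard = 4 := by
          rw [Set.insert_union, Set.singleton_union,
            Set.ncard_insert_of_notMem (by simp [hx'x.symm, hne, hxy']),
            Set.ncard_insert_of_notMem (by simp [hyx'.symm, hx'y']),
            Set.ncard_pair hy'y.symm]
        rw [h4]
      have hpt : ∀ u : Fin n,
          ((if u = x ∨ u = x' then (0:ℝ) else 1 / ((n:ℝ) - 2)) -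
            min (if u = x ∨ u = x' then (0:ℝ) else 1 / ((n:ℝ) - 2))
              (if u = y ∨ u = y' then (0:ℝ) else 1 / ((n:ℝ) - 2))) =
          (if u = y then 1 / ((n:ℝ) - 2) else 0) +
          (if u = y' then 1 / ((n:ℝ) - 2) else 0) := by
        intro u
        by_cases h1 : u = x ∨ u = x'
        · have hu1 : u ≠ y := by rcases h1 with rfl | rfl; exacts [hne, fun h => hyx' h.symm]
          have hu2 : u ≠ y' := by rcases h1 with rfl | rfl; exacts [hxy', hx'y']
          rw [if_pos h1, if_neg (not_or.mpr ⟨hu1, hu2⟩), min_eq_left d2pos.le,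
            if_neg hu1, if_neg hu2]
          ring
        · by_cases h2 : u = y ∨ u = y'
          · rw [if_neg h1, if_pos h2, min_eq_right d2pos.le]
            rcases h2 with rfl | rfl
            · rw [if_pos rfl, if_neg hy'y.symm]; ring
            · rw [if_neg hy'y, if_pos rfl]; ring
          · push_neg at h2
            rw [if_neg h1, if_neg (not_or.mpr ⟨h2.1, h2.2⟩), min_self,
              if_neg h2.1, if_neg h2.2]
            ring
      have hrsum : ∑ u : Fin n,
          ((if u = x ∨ u = x' then (0:ℝ) else 1 / ((n:ℝ) - 2)) -
            min (if u = x ∨ u = x' then (0:ℝ) else 1 / ((n:ℝ) - 2))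
              (if u = y ∨ u = y' then (0:ℝ) else 1 / ((n:ℝ) - 2))) =
          1 / ((n:ℝ) - 2) + 1 / ((n:ℝ) - 2) := by
        rw [Finset.sum_congr rfl fun u _ => hpt u, Finset.sum_add_distrib,
          Finset.sum_ite_eq', Finset.sum_ite_eq', if_pos (Finset.mem_univ y),
          if_pos (Finset.mem_univ y')]
      have hW : wassersteinDist G (vertexMeasure G x) (vertexMeasure G y) =
          1 / ((n:ℝ) - 2) + 1 / ((n:ℝ) - 2) := by
        rw [hμ, hν]
        refine (wass_formula G _ _
          (fun u => by
            show (0:ℝ) ≤ if u = x ∨ u = x' then (0:ℝ) else 1 / ((n:ℝ) - 2)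
            split <;> positivity)
          (fun u => by
            show (0:ℝ) ≤ if u = y ∨ u = y' then (0:ℝ) else 1 / ((n:ℝ) - 2)
            split <;> positivity)
          (by rw [sumB hn hx'x.symm, sumB hn hy'y.symm])
          (fun u v huv => dist_ge_one hG hM hn huv) ?_ ?_).trans hrsum
        · intro u v hu hv
          beta_reduce at hu hv
          have hu' : u = y ∨ u = y' := by
            by_contra h2
            by_cases h1 : u = x ∨ u = x'
            · rw [if_pos h1] at hu
              rcases min_cases (0:ℝ) (if u = y ∨ u = y' then (0:ℝ) else 1 / ((n:ℝ) - 2))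
                with ⟨hm, _⟩ | ⟨hm, hm2⟩
              · rw [hm] at hu; exact absurd hu (lt_irrefl _)
              · rw [hm] at hu
                split at hu <;> linarith
            · rw [if_neg h1, if_neg h2, min_self] at hu
              exact absurd hu (lt_irrefl _)
          have hv' : v = x ∨ v = x' := by
            by_contra h1
            by_cases h2 : v = y ∨ v = y'
            · rw [if_pos h2] at hv
              have hnn : (0:ℝ) ≤ if v = x ∨ v = x' then (0:ℝ) else 1 / ((n:ℝ) - 2) := by
                split <;> positivity
              rw [min_eq_right hnn] at hv
              exact absurd hv (lt_irrefl _)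
            · rw [if_neg h1, if_neg h2, min_self] at hv
              exact absurd hv (lt_irrefl _)
          rw [SimpleGraph.dist_eq_one_iff_adj, adj_iff' hG]
          constructor
          · rcases hu' with rfl | rfl <;> rcases hv' with rfl | rfl <;>
              [exact hne.symm; exact hyx'; exact hxy'.symm; exact hx'y'.symm]
          · intro hmem
            rcases hu' with rfl | rfl <;> rcases hv' with rfl | rfl
            · exact hsxy (by rw [Sym2.eq_swap]; exact hmem)
            · exact hx'y' (partner_uniq hM hmem hy')
            · exact hne (partner_uniq hM hmem (by rw [Sym2.eq_swap]; exact hy'))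
            · exact hyx' (partner_uniq hM hmem (by rw [Sym2.eq_swap]; exact hy')).symm
        · rw [hrsum]; positivity
      have hric : ricciCurv G x y = 1 - (1 / ((n:ℝ) - 2) + 1 / ((n:ℝ) - 2)) := by
        rw [hric0, hW]
      refine ⟨?_, ?_, ?_, ?_⟩
      · rw [hric, htri, hdx, hdy, max_self, hc4, hc2]
        field_simp
        ring
      · rintro ⟨h1, h2⟩; rw [hdx] at h1; omega
      · rintro ⟨h1, h2⟩; rw [hdx] at h1; omega
      · rintro ⟨h1, h2⟩
        rw [hric]
        field_simp
        ring
    · -- Case 2' : x matched, y unmatched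
      push_neg at hyM
      have hμ := meas_matched hG hM hn hx'
      have hν := meas_unmatched hG hn hyM
      have hdx : graphDeg G x = n - 2 := deg_matched hG hM hx'
      have hdy : graphDeg G y = n - 1 := deg_unmatched hG hyM
      have htri : triCount G x y = n - 3 := by
        rw [triCount, nbhd_matched hG hM hx', nbhd_unmatched hG hyM,
          ← Set.compl_union, ncard_compl_eq]
        have h3 : ({x, x'} ∪ {y} : Set (Fin n)).ncard = 3 := by
          rw [Set.union_singleton,
            Set.ncard_insert_of_notMem (by simp [Ne.symm hne, hyx']),
            Set.ncard_pair hx'x.symm]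
        rw [h3]
      have hpt : ∀ u : Fin n,
          ((if u = x ∨ u = x' then (0:ℝ) else 1 / ((n:ℝ) - 2)) -
            min (if u = x ∨ u = x' then (0:ℝ) else 1 / ((n:ℝ) - 2))
              (if u = y then (0:ℝ) else 1 / ((n:ℝ) - 1))) =
          (if u = x ∨ u = x' then (0:ℝ) else (1 / ((n:ℝ) - 2) - 1 / ((n:ℝ) - 1))) +
          (if u = y then 1 / ((n:ℝ) - 1) else 0) := by
        intro u
        by_cases h1 : u = x ∨ u = x'
        · have hu1 : u ≠ y := by
            rcases h1 with rfl | rfl; exacts [hne, fun h => hyx' h.symm]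
          rw [if_pos h1, if_neg hu1, min_eq_left d1pos.le, if_pos h1, if_neg hu1]
          ring
        · by_cases h2 : u = y
          · rw [if_neg h1, if_pos h2, min_eq_right d2pos.le, if_neg h1, if_pos h2]
            ring
          · rw [if_neg h1, if_neg h2, min_eq_right d12, if_neg h1, if_neg h2]
            ring
      have hrsum : ∑ u : Fin n,
          ((if u = x ∨ u = x' then (0:ℝ) else 1 / ((n:ℝ) - 2)) -
            min (if u = x ∨ u = x' then (0:ℝ) else 1 / ((n:ℝ) - 2))
              (if u = y then (0:ℝ) else 1 / ((n:ℝ) - 1))) =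
          ((n:ℝ) * (1 / ((n:ℝ) - 2) - 1 / ((n:ℝ) - 1)) -
            2 * (1 / ((n:ℝ) - 2) - 1 / ((n:ℝ) - 1))) + 1 / ((n:ℝ) - 1) := by
        rw [Finset.sum_congr rfl fun u _ => hpt u, Finset.sum_add_distrib,
          sum_ite_compl2 hx'x.symm, Finset.sum_ite_eq', if_pos (Finset.mem_univ y)]
      have hd21 : (0:ℝ) ≤ 1 / ((n:ℝ) - 2) - 1 / ((n:ℝ) - 1) := by linarith
      have hprod : (0:ℝ) ≤ ((n:ℝ) - 2) * (1 / ((n:ℝ) - 2) - 1 / ((n:ℝ) - 1)) :=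
        mul_nonneg (by linarith) hd21
      have hW : wassersteinDist G (vertexMeasure G x) (vertexMeasure G y) =
          ((n:ℝ) * (1 / ((n:ℝ) - 2) - 1 / ((n:ℝ) - 1)) -
            2 * (1 / ((n:ℝ) - 2) - 1 / ((n:ℝ) - 1))) + 1 / ((n:ℝ) - 1) := by
        rw [hμ, hν]
        refine (wass_formula G _ _
          (fun u => by
            show (0:ℝ) ≤ if u = x ∨ u = x' then (0:ℝ) else 1 / ((n:ℝ) - 2)
            split <;> positivity)
          (fun u => by
            show (0:ℝ) ≤ if u = y then (0:ℝ) else 1 / ((n:ℝ) - 1)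
            split <;> positivity)
          (by rw [sumB hn hx'x.symm, sumA hn y])
          (fun u v huv => dist_ge_one hG hM hn huv) ?_ ?_).trans hrsum
        · intro u v hu hv
          beta_reduce at hu hv
          have hu' : ¬(u = x ∨ u = x') := by
            intro h1
            rw [if_pos h1] at hu
            have hnn : (0:ℝ) ≤ if u = y then (0:ℝ) else 1 / ((n:ℝ) - 1) := by
              split <;> positivity
            rw [min_eq_left hnn] at hu
            exact absurd hu (lt_irrefl _)
          have hv' : v = x ∨ v = x' := by
            by_contra h1
            by_cases h2 : v = y
            · rw [if_pos h2] at hv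
              have hnn : (0:ℝ) ≤ if v = x ∨ v = x' then (0:ℝ) else 1 / ((n:ℝ) - 2) := by
                split <;> positivity
              rw [min_eq_right hnn] at hv
              exact absurd hv (lt_irrefl _)
            · rw [if_neg h1, if_neg h2, min_eq_right d12] at hv
              exact absurd hv (lt_irrefl _)
          push_neg at hu'
          rw [SimpleGraph.dist_eq_one_iff_adj, adj_iff' hG]
          constructor
          · rcases hv' with rfl | rfl; exacts [hu'.1, hu'.2]
          · intro hmem
            rcases hv' with rfl | rfl
            · exact hu'.2 (partner_uniq hM (by rw [Sym2.eq_swap]; exact hmem) hx')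
            · exact hu'.1 (partner_uniq hM (by rw [Sym2.eq_swap]; exact hmem)
                (by rw [Sym2.eq_swap]; exact hx'))
        · rw [hrsum]
          nlinarith [hprod, d1pos]
      have hric : ricciCurv G x y = 1 -
          (((n:ℝ) * (1 / ((n:ℝ) - 2) - 1 / ((n:ℝ) - 1)) -
            2 * (1 / ((n:ℝ) - 2) - 1 / ((n:ℝ) - 1))) + 1 / ((n:ℝ) - 1)) := by
        rw [hric0, hW]
      refine ⟨?_, ?_, ?_, ?_⟩
      · rw [hric, htri, hdx, hdy, hc3, hc2, hc1,
          max_eq_right (by linarith : ((n:ℝ) - 2) ≤ (n:ℝ) - 1)]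
        field_simp
        ring
      · rintro ⟨h1, h2⟩; rw [hdx] at h1; omega
      · rintro ⟨h1, h2⟩; rw [hdx] at h1; omega
      · rintro ⟨h1, h2⟩; rw [hdy] at h2; omega
  · by_cases hyM : ∃ y', s(y, y') ∈ M
    · -- Case 2 : x unmatched, y matched
      push_neg at hxM
      obtain ⟨y', hy'⟩ := hyM
      have hy'y : y' ≠ y := partner_ne hM hy'
      have hxy' : x ≠ y' := by
        intro he
        apply hsxy
        rw [Sym2.eq_swap, he]; exact hy'
      have hμ := meas_unmatched hG hn hxM
      have hν := meas_matched hG hM hn hy'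
      have hdx : graphDeg G x = n - 1 := deg_unmatched hG hxM
      have hdy : graphDeg G y = n - 2 := deg_matched hG hM hy'
      have htri : triCount G x y = n - 3 := by
        rw [triCount, nbhd_unmatched hG hxM, nbhd_matched hG hM hy',
          ← Set.compl_union, ncard_compl_eq]
        have h3 : ({x} ∪ {y, y'} : Set (Fin n)).ncard = 3 := by
          rw [Set.singleton_union,
            Set.ncard_insert_of_notMem (by simp [hne, hxy']),
            Set.ncard_pair hy'y.symm]
        rw [h3]
      have hpt : ∀ u : Fin n,
          ((if u = x then (0:ℝ) else 1 / ((n:ℝ) - 1)) -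
            min (if u = x then (0:ℝ) else 1 / ((n:ℝ) - 1))
              (if u = y ∨ u = y' then (0:ℝ) else 1 / ((n:ℝ) - 2))) =
          (if u = y then 1 / ((n:ℝ) - 1) else 0) +
          (if u = y' then 1 / ((n:ℝ) - 1) else 0) := by
        intro u
        by_cases h2 : u = y ∨ u = y'
        · have hu1 : u ≠ x := by
            rcases h2 with rfl | rfl; exacts [Ne.symm hne, fun h => hxy' h.symm]
          rw [if_neg hu1, if_pos h2, min_eq_right d1pos.le]
          rcases h2 with rfl | rfl
          · rw [if_pos rfl, if_neg (Ne.symm hy'y)]; ring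
          · rw [if_neg hy'y, if_pos rfl]; ring
        · have h2' := not_or.mp h2
          by_cases h1 : u = x
          · rw [if_pos h1, if_neg h2, min_eq_left d2pos.le, if_neg h2'.1, if_neg h2'.2]
            ring
          · rw [if_neg h1, if_neg h2, min_eq_left d12, if_neg h2'.1, if_neg h2'.2]
            ring
      have hrsum : ∑ u : Fin n,
          ((if u = x then (0:ℝ) else 1 / ((n:ℝ) - 1)) -
            min (if u = x then (0:ℝ) else 1 / ((n:ℝ) - 1))
              (if u = y ∨ u = y' then (0:ℝ) else 1 / ((n:ℝ) - 2))) =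
          1 / ((n:ℝ) - 1) + 1 / ((n:ℝ) - 1) := by
        rw [Finset.sum_congr rfl fun u _ => hpt u, Finset.sum_add_distrib,
          Finset.sum_ite_eq', Finset.sum_ite_eq', if_pos (Finset.mem_univ y),
          if_pos (Finset.mem_univ y')]
      have hW : wassersteinDist G (vertexMeasure G x) (vertexMeasure G y) =
          1 / ((n:ℝ) - 1) + 1 / ((n:ℝ) - 1) := by
        rw [hμ, hν]
        refine (wass_formula G _ _
          (fun u => by
            show (0:ℝ) ≤ if u = x then (0:ℝ) else 1 / ((n:ℝ) - 1)
            split <;> positivity)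
          (fun u => by
            show (0:ℝ) ≤ if u = y ∨ u = y' then (0:ℝ) else 1 / ((n:ℝ) - 2)
            split <;> positivity)
          (by rw [sumA hn x, sumB hn hy'y.symm])
          (fun u v huv => dist_ge_one hG hM hn huv) ?_ ?_).trans hrsum
        · intro u v hu hv
          beta_reduce at hu hv
          have hu' : u = y ∨ u = y' := by
            by_contra h2
            by_cases h1 : u = x
            · rw [if_pos h1] at hu
              have hnn : (0:ℝ) ≤ if u = y ∨ u = y' then (0:ℝ) else 1 / ((n:ℝ) - 2) := by
                split <;> positivity
              rw [min_eq_left hnn] at hu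
              exact absurd hu (lt_irrefl _)
            · rw [if_neg h1, if_neg h2, min_eq_left d12] at hu
              exact absurd hu (lt_irrefl _)
          have hv' : ¬(v = y ∨ v = y') := by
            intro h2
            rw [if_pos h2] at hv
            have hnn : (0:ℝ) ≤ if v = x then (0:ℝ) else 1 / ((n:ℝ) - 1) := by
              split <;> positivity
            rw [min_eq_right hnn] at hv
            exact absurd hv (lt_irrefl _)
          push_neg at hv'
          rw [SimpleGraph.dist_eq_one_iff_adj, adj_iff' hG]
          constructor
          · rcases hu' with rfl | rfl
            exacts [fun h => hv'.1 h.symm, fun h => hv'.2 h.symm]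
          · intro hmem
            rcases hu' with rfl | rfl
            · exact hv'.2 (partner_uniq hM hmem hy')
            · exact hv'.1 (partner_uniq hM hmem (by rw [Sym2.eq_swap]; exact hy'))
        · rw [hrsum]; positivity
      have hric : ricciCurv G x y = 1 - (1 / ((n:ℝ) - 1) + 1 / ((n:ℝ) - 1)) := by
        rw [hric0, hW]
      refine ⟨?_, ?_, ?_, ?_⟩
      · rw [hric, htri, hdx, hdy, hc3, hc1, hc2,
          max_eq_left (by linarith : ((n:ℝ) - 2) ≤ (n:ℝ) - 1)]
        field_simp
        ring
      · rintro ⟨h1, h2⟩; rw [hdy] at h2; omega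
      · rintro ⟨h1, h2⟩
        rw [hric]
        field_simp
        ring
      · rintro ⟨h1, h2⟩; rw [hdx] at h1; omega
    · -- Case 1 : both unmatched
      push_neg at hxM
      push_neg at hyM
      have hμ := meas_unmatched hG hn hxM
      have hν := meas_unmatched hG hn hyM
      have hdx : graphDeg G x = n - 1 := deg_unmatched hG hxM
      have hdy : graphDeg G y = n - 1 := deg_unmatched hG hyM
      have htri : triCount G x y = n - 2 := by
        rw [triCount, nbhd_unmatched hG hxM, nbhd_unmatched hG hyM,
          ← Set.compl_union, ncard_compl_eq, Set.singleton_union,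
          Set.ncard_pair hne]
      have hpt : ∀ u : Fin n,
          ((if u = x then (0:ℝ) else 1 / ((n:ℝ) - 1)) -
            min (if u = x then (0:ℝ) else 1 / ((n:ℝ) - 1))
              (if u = y then (0:ℝ) else 1 / ((n:ℝ) - 1))) =
          (if u = y then 1 / ((n:ℝ) - 1) else 0) := by
        intro u
        by_cases h1 : u = x
        · have h2 : u ≠ y := by rw [h1]; exact hne
          rw [if_pos h1, if_neg h2, min_eq_left d1pos.le, if_neg h2]
          ring
        · by_cases h2 : u = y
          · rw [if_neg h1, if_pos h2, min_eq_right d1pos.le, if_pos h2]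
            ring
          · rw [if_neg h1, if_neg h2, min_self, if_neg h2]
            ring
      have hrsum : ∑ u : Fin n,
          ((if u = x then (0:ℝ) else 1 / ((n:ℝ) - 1)) -
            min (if u = x then (0:ℝ) else 1 / ((n:ℝ) - 1))
              (if u = y then (0:ℝ) else 1 / ((n:ℝ) - 1))) = 1 / ((n:ℝ) - 1) := by
        rw [Finset.sum_congr rfl fun u _ => hpt u, Finset.sum_ite_eq',
          if_pos (Finset.mem_univ y)]
      have hW : wassersteinDist G (vertexMeasure G x) (vertexMeasure G y) =
          1 / ((n:ℝ) - 1) := by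
        rw [hμ, hν]
        refine (wass_formula G _ _
          (fun u => by
            show (0:ℝ) ≤ if u = x then (0:ℝ) else 1 / ((n:ℝ) - 1)
            split <;> positivity)
          (fun u => by
            show (0:ℝ) ≤ if u = y then (0:ℝ) else 1 / ((n:ℝ) - 1)
            split <;> positivity)
          (by rw [sumA hn x, sumA hn y])
          (fun u v huv => dist_ge_one hG hM hn huv) ?_ ?_).trans hrsum
        · intro u v hu hv
          beta_reduce at hu hv
          have hu' : u = y := by
            by_contra h2
            by_cases h1 : u = x
            · rw [if_pos h1] at hu
              have hnn : (0:ℝ) ≤ if u = y then (0:ℝ) else 1 / ((n:ℝ) - 1) := by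
                split <;> positivity
              rw [min_eq_left hnn] at hu
              exact absurd hu (lt_irrefl _)
            · rw [if_neg h1, if_neg h2, min_self] at hu
              exact absurd hu (lt_irrefl _)
          have hv' : v = x := by
            by_contra h1
            by_cases h2 : v = y
            · rw [if_pos h2] at hv
              have hnn : (0:ℝ) ≤ if v = x then (0:ℝ) else 1 / ((n:ℝ) - 1) := by
                split <;> positivity
              rw [min_eq_right hnn] at hv
              exact absurd hv (lt_irrefl _)
            · rw [if_neg h1, if_neg h2, min_self] at hv
              exact absurd hv (lt_irrefl _)
          subst hu'
          subst hv'
          exact SimpleGraph.dist_eq_one_iff_adj.mpr hxy.symm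
        · rw [hrsum]; positivity
      have hric : ricciCurv G x y = 1 - 1 / ((n:ℝ) - 1) := by
        rw [hric0, hW]
      refine ⟨?_, ?_, ?_, ?_⟩
      · rw [hric, htri, hdx, hdy, max_self, hc2, hc1]
        field_simp
        ring
      · rintro ⟨h1, h2⟩
        rw [hric]
        field_simp
        ring
      · rintro ⟨h1, h2⟩; rw [hdy] at h2; omega
      · rintro ⟨h1, h2⟩; rw [hdx] at h1; omega
end

section
/- Let G = K_{2m} − M where M is a perfect matching in the complete graph K_{2m} (m ≥ 3). Then for every edge (x,y) of G, the Ollivier–Ricci curvature equals κ(x,y) = (2m−4)/(2m−2). -/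
open Finset
open scoped Classical

/-!
Removing a perfect matching `M` with partner map `p` leaves a graph in which `x` and an
adjacent `y` have the same neighbours, except that only `x` sees `y, p y` and only `y` sees
`x, p x`. Transporting `y ↦ x` and `p y ↦ p x` along edges and every common neighbour to
itself costs `2 / (2m - 2)`. The indicator of the matching edge `{y, p y}` is `1`-Lipschitz
and attains this value in the dual, so the transport is optimal.
-/

open SimpleGraph

section Wasserstein

variable {V : Type*} [Fintype V] {G : SimpleGraph V} {μ ν : V → ℝ}

lemma IsCoupling.sum_sub_mul_le {A : V → V → ℝ} (hA : IsCoupling μ ν A) {f : V → ℝ}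
    (hf : ∀ u v, f u - f v ≤ G.dist u v) :
    ∑ u, (μ u - ν u) * f u ≤ ∑ u, ∑ v, A u v * (G.dist u v : ℝ) := by
  obtain ⟨hnn, hrow, hcol⟩ := hA
  calc ∑ u, (μ u - ν u) * f u = ∑ u, ∑ v, A u v * (f u - f v) := by
        simp only [mul_sub, sum_sub_distrib, sub_mul, ← sum_mul, hrow]
        rw [sum_comm (f := fun u v => A u v * f v)]
        simp only [← sum_mul, hcol]
    _ ≤ _ := sum_le_sum fun u _ => sum_le_sum fun v _ =>
        mul_le_mul_of_nonneg_left (hf u v) (hnn u v)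

lemma wassersteinDist_eq_of_isCoupling {A : V → V → ℝ} (hA : IsCoupling μ ν A) {f : V → ℝ}
    (hf : ∀ u v, f u - f v ≤ G.dist u v)
    (hcost : ∑ u, ∑ v, A u v * (G.dist u v : ℝ) ≤ ∑ u, (μ u - ν u) * f u) :
    wassersteinDist G μ ν = ∑ u, (μ u - ν u) * f u := by
  have hlower : ∀ c ∈ {c : ℝ | ∃ B : V → V → ℝ, IsCoupling μ ν B ∧
      c = ∑ u : V, ∑ v : V, B u v * (G.dist u v : ℝ)}, ∑ u, (μ u - ν u) * f u ≤ c := by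
    rintro _ ⟨B, hB, rfl⟩
    exact hB.sum_sub_mul_le hf
  have hA_mem : ∑ u, ∑ v, A u v * (G.dist u v : ℝ) ∈ {c : ℝ | ∃ B : V → V → ℝ,
      IsCoupling μ ν B ∧ c = ∑ u : V, ∑ v : V, B u v * (G.dist u v : ℝ)} := ⟨A, hA, rfl⟩
  exact le_antisymm ((csInf_le ⟨_, hlower⟩ hA_mem).trans hcost) (le_csInf ⟨_, hA_mem⟩ hlower)

lemma isCoupling_perm (σ : Equiv.Perm V) (hμ : ∀ u, 0 ≤ μ u) (hσ : ∀ u, ν (σ u) = μ u) :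
    IsCoupling μ ν (fun u v => if v = σ u then μ u else 0) := by
  refine ⟨fun u v => ite_nonneg (hμ u) le_rfl, fun u => by simp, fun v => ?_⟩
  simp_rw [← σ.symm_apply_eq, sum_ite_eq, mem_univ, if_true, ← hσ,
    Equiv.apply_symm_apply]

lemma wassersteinDist_eq_of_perm (σ : Equiv.Perm V) (hμ : ∀ u, 0 ≤ μ u)
    (hσ : ∀ u, ν (σ u) = μ u) {f : V → ℝ} (hf : ∀ u v, f u - f v ≤ G.dist u v)
    (hcost : ∑ u, μ u * (G.dist u (σ u) : ℝ) ≤ ∑ u, (μ u - ν u) * f u) :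
    wassersteinDist G μ ν = ∑ u, (μ u - ν u) * f u := by
  refine wassersteinDist_eq_of_isCoupling (isCoupling_perm σ hμ hσ) hf ?_
  simpa only [ite_mul, zero_mul, sum_ite_eq', mem_univ, if_true] using hcost

end Wasserstein

structure IsCocktailParty {V : Type*} (G : SimpleGraph V) (p : V → V) : Prop where
  involutive : Function.Involutive p
  ne_self : ∀ u, p u ≠ u
  adj_iff : ∀ u v, G.Adj u v ↔ u ≠ v ∧ v ≠ p u

namespace IsCocktailParty

variable {V : Type*} {G : SimpleGraph V} {p : V → V} (hG : IsCocktailParty G p) {x y : V}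
include hG

lemma not_adj_self_partner (u : V) : ¬ G.Adj u (p u) := by
  simp [hG.adj_iff]

lemma adj_partner (hxy : G.Adj x y) : G.Adj x (p y) := by
  obtain ⟨hne, hnp⟩ := (hG.adj_iff x y).1 hxy
  refine (hG.adj_iff x (p y)).2 ⟨fun h => hnp ?_, fun h => hne (hG.involutive.injective h).symm⟩
  rw [h, hG.involutive]

lemma partner_adj_partner (hxy : G.Adj x y) : G.Adj (p x) (p y) :=
  hG.adj_partner (hG.adj_partner hxy.symm).symm

lemma adj_perm_apply_iff (σ : Equiv.Perm V) (hx : σ x = y) (hpx : σ (p x) = p y) (u : V) :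
    G.Adj y (σ u) ↔ G.Adj x u := by
  rw [hG.adj_iff, hG.adj_iff, ← hpx, ← hx, σ.injective.ne_iff, σ.injective.ne_iff]

-- Every vertex outside the edge `{y, p y}` is adjacent to both of its ends.
lemma indicator_pair_sub_le_dist (y u v : V) :
    ((if u = y ∨ u = p y then 1 else 0 : ℝ) - if v = y ∨ v = p y then 1 else 0) ≤ G.dist u v := by
  by_cases hu : u = y ∨ u = p y
  · by_cases hv : v = y ∨ v = p y
    · simp [hu, hv]
    · have huv : G.Adj u v := by
        refine (hG.adj_iff u v).2 ⟨fun h => hv (h ▸ hu), fun h => hv ?_⟩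
        rcases hu with rfl | rfl
        · exact Or.inr h
        · exact Or.inl (h.trans (hG.involutive _))
      simp [hu, hv, dist_eq_one_iff_adj.2 huv]
  · simp only [hu, if_false, zero_sub]
    exact (neg_nonpos.2 (by positivity)).trans (Nat.cast_nonneg _)

variable [Fintype V]

lemma graphDeg_eq (u : V) : graphDeg G u = Fintype.card V - 2 := by
  have hN : G.neighborSet u = ↑((univ : Finset V) \ {u, p u}) := by
    ext v
    simp [hG.adj_iff, eq_comm]
  rw [graphDeg, hN, Set.ncard_coe_finset, card_sdiff_of_subset (subset_univ _),
    card_pair (hG.ne_self u).symm, card_univ]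

lemma two_lt_card (hxy : G.Adj x y) : 2 < Fintype.card V := by
  have hpos : 0 < graphDeg G x := by
    rw [graphDeg, Set.ncard_pos (G.neighborSet x).toFinite]
    exact ⟨y, hxy⟩
  rw [hG.graphDeg_eq] at hpos
  omega

lemma vertexMeasure_apply (u v : V) :
    vertexMeasure G u v = if G.Adj u v then 1 / ((Fintype.card V - 2 : ℕ) : ℝ) else 0 := by
  rw [vertexMeasure, hG.graphDeg_eq]

lemma vertexMeasure_mul_dist_swap_mul_swap (hxy : G.Adj x y) (u : V) :
    vertexMeasure G x u * (G.dist u ((Equiv.swap y x * Equiv.swap (p y) (p x)) u) : ℝ) =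
      (vertexMeasure G x u - vertexMeasure G y u) * if u = y ∨ u = p y then 1 else 0 := by
  have hxpx : x ≠ p x := (hG.ne_self x).symm
  have hypy : y ≠ p y := (hG.ne_self y).symm
  have hypx : y ≠ p x := ((hG.adj_iff x y).1 hxy).2
  by_cases huy : u = y
  · subst huy
    simp [hG.vertexMeasure_apply, hxy, Equiv.swap_apply_of_ne_of_ne hypy hypx,
      dist_eq_one_iff_adj.2 hxy.symm]
  by_cases hupy : u = p y
  · subst hupy
    simp [hG.vertexMeasure_apply, hG.adj_partner hxy, hG.not_adj_self_partner, huy,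
      Equiv.swap_apply_of_ne_of_ne hypx.symm hxpx.symm,
      dist_eq_one_iff_adj.2 (hG.partner_adj_partner hxy).symm]
  by_cases hux : u = x
  · subst hux
    simp [hG.vertexMeasure_apply, huy, hupy]
  by_cases hupx : u = p x
  · subst hupx
    simp [hG.vertexMeasure_apply, huy, hupy, hG.not_adj_self_partner]
  simp [Equiv.swap_apply_of_ne_of_ne hupy hupx, Equiv.swap_apply_of_ne_of_ne huy hux, huy, hupy]

lemma wassersteinDist_vertexMeasure (hxy : G.Adj x y) :
    wassersteinDist G (vertexMeasure G x) (vertexMeasure G y) =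
      2 / ((Fintype.card V - 2 : ℕ) : ℝ) := by
  have hxpx : x ≠ p x := (hG.ne_self x).symm
  have hypy : y ≠ p y := (hG.ne_self y).symm
  have hxpy : x ≠ p y := (hG.adj_partner hxy).ne
  set σ : Equiv.Perm V := Equiv.swap y x * Equiv.swap (p y) (p x)
  have hσx : σ x = y := by
    simp [σ, Equiv.swap_apply_of_ne_of_ne hxpy hxpx]
  have hσpx : σ (p x) = p y := by
    simp [σ, Equiv.swap_apply_of_ne_of_ne hypy.symm hxpy.symm]
  rw [wassersteinDist_eq_of_perm σ (fun u => by rw [hG.vertexMeasure_apply]; positivity)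
    (fun u => by simp only [hG.vertexMeasure_apply, hG.adj_perm_apply_iff σ hσx hσpx])
    (hG.indicator_pair_sub_le_dist y)
    (sum_congr rfl fun u _ => hG.vertexMeasure_mul_dist_swap_mul_swap hxy u).le]
  have hpair : (univ.filter fun u => u = y ∨ u = p y) = {y, p y} := by
    ext u
    simp
  simp only [mul_ite, mul_one, mul_zero, ← sum_filter, hpair, sum_pair hypy,
    hG.vertexMeasure_apply]
  simp [hxy, hG.adj_partner hxy, hG.not_adj_self_partner]
  ring

lemma ricciCurv_eq (hxy : G.Adj x y) :
    ricciCurv G x y = ((Fintype.card V : ℝ) - 4) / ((Fintype.card V : ℝ) - 2) := by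
  have hcard := hG.two_lt_card hxy
  have hden : (Fintype.card V : ℝ) - 2 ≠ 0 := by
    rw [sub_ne_zero]; exact_mod_cast hcard.ne'
  rw [ricciCurv, hG.wassersteinDist_vertexMeasure hxy, dist_eq_one_iff_adj.2 hxy,
    Nat.cast_sub hcard.le, Nat.cast_ofNat, Nat.cast_one, div_one, one_sub_div hden]
  ring

end IsCocktailParty

lemma IsMatchingSet.eq_of_mem {α : Type*} {M : Finset (Sym2 α)} (hM : IsMatchingSet M)
    {u v w : α} (hv : s(u, v) ∈ M) (hw : s(u, w) ∈ M) : v = w := by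
  have huvw : s(u, v) = s(u, w) := by
    by_contra hne
    exact hM.2 hv hw hne u (Sym2.mem_mk_left u v) (Sym2.mem_mk_left u w)
  exact Sym2.congr_right.1 huvw

lemma IsMatchingSet.exists_isCocktailParty {α : Type*} {M : Finset (Sym2 α)}
    (hM : IsMatchingSet M) (hperf : ∀ x, ∃ e ∈ M, x ∈ e) :
    ∃ p, IsCocktailParty ((⊤ : SimpleGraph α) \ fromEdgeSet (M : Set (Sym2 α))) p := by
  choose e heM hue using hperf
  set p : α → α := fun u => Sym2.Mem.other (hue u)
  have hp : ∀ u, s(u, p u) ∈ M := fun u => by rw [Sym2.other_spec]; exact heM u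
  have hmem : ∀ u v, s(u, v) ∈ M ↔ v = p u := fun u v =>
    ⟨fun h => hM.eq_of_mem h (hp u), fun h => h ▸ hp u⟩
  refine ⟨p, fun u => ?_, fun u h => ?_, fun u v => ?_⟩
  · exact ((hmem (p u) u).1 (Sym2.eq_swap ▸ hp u)).symm
  · exact hM.1 _ (hp u) (Sym2.mk_isDiag_iff.2 h.symm)
  · simp only [sdiff_adj, top_adj, fromEdgeSet_adj, mem_coe, hmem]
    tauto

theorem stmt4_general (m : ℕ)
    (M : Finset (Sym2 (Fin (2 * m)))) (hM : IsMatchingSet M)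
    (hperf : ∀ x : Fin (2 * m), ∃ e ∈ M, x ∈ e)
    (G : SimpleGraph (Fin (2 * m))) (hG : G = ⊤ \ SimpleGraph.fromEdgeSet ↑M)
    (x y : Fin (2 * m)) (hxy : G.Adj x y) :
    ricciCurv G x y = (2 * (m : ℝ) - 4) / (2 * (m : ℝ) - 2) := by
  obtain ⟨p, hp⟩ := hM.exists_isCocktailParty hperf
  subst hG
  rw [hp.ricciCurv_eq hxy, Fintype.card_fin]
  push_cast
  ring

theorem stmt4 (m : ℕ) (hm : 3 ≤ m)
    (M : Finset (Sym2 (Fin (2 * m)))) (hM : IsMatchingSet M)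
    (hMcard : M.card = m) (hperf : ∀ x : Fin (2 * m), ∃ e ∈ M, x ∈ e)
    (G : SimpleGraph (Fin (2 * m))) (hG : G = ⊤ \ SimpleGraph.fromEdgeSet ↑M)
    (x y : Fin (2 * m)) (hxy : G.Adj x y) :
    ricciCurv G x y = (2 * (m : ℝ) - 4) / (2 * (m : ℝ) - 2) :=
  stmt4_general m M hM hperf G hG x y hxy
end

section
/- Let G be the graph obtained from K_n (n ≥ 4) by removing m edges (1 ≤ m ≤ n−3) all incident to a single fixed vertex u₀. Then for the edge between u₀ and any adjacent vertex v of degree n−1, the Ollivier–Ricci curvature equals κ(v, u₀) = (n−m−2)/(n−1). -/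
open Finset
open scoped Classical

theorem stmt6 (n m : ℕ) (hn : 4 ≤ n) (hm1 : 1 ≤ m) (hm2 : m ≤ n - 3)
    (u₀ : Fin n) (S : Finset (Fin n)) (hu₀S : u₀ ∉ S) (hScard : S.card = m)
    (G : SimpleGraph (Fin n))
    (hG : G = ⊤ \ SimpleGraph.fromEdgeSet {e | ∃ x ∈ S, e = s(u₀, x)})
    (v : Fin n) (hv : G.Adj v u₀) (hdeg : graphDeg G v = n - 1) :
    ricciCurv G v u₀ = ((n : ℝ) - (m : ℝ) - 2) / ((n : ℝ) - 1) := by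
  classical
  have hmn : m + 3 ≤ n := by omega
  have hvu : v ≠ u₀ := G.ne_of_adj hv
  have hAdj : ∀ a b : Fin n, G.Adj a b ↔
      a ≠ b ∧ ¬(a = u₀ ∧ b ∈ S) ∧ ¬(b = u₀ ∧ a ∈ S) := by
    intro a b
    subst hG
    simp only [SimpleGraph.sdiff_adj, SimpleGraph.top_adj, SimpleGraph.fromEdgeSet_adj,
      Set.mem_setOf_eq]
    constructor
    · rintro ⟨hne, h⟩
      refine ⟨hne, ?_, ?_⟩
      · rintro ⟨rfl, hb⟩; exact h ⟨⟨b, hb, rfl⟩, hne⟩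
      · rintro ⟨rfl, ha⟩; exact h ⟨⟨a, ha, Sym2.eq_swap⟩, hne⟩
    · rintro ⟨hne, h1, h2⟩
      refine ⟨hne, ?_⟩
      rintro ⟨⟨x, hx, hxe⟩, -⟩
      rw [Sym2.eq_iff] at hxe
      rcases hxe with ⟨rfl, rfl⟩ | ⟨rfl, rfl⟩
      · exact h1 ⟨rfl, hx⟩
      · exact h2 ⟨rfl, hx⟩
  have hvS : v ∉ S := by
    have h := (hAdj v u₀).1 hv
    exact fun hc => h.2.2 ⟨rfl, hc⟩
  -- v is adjacent to everything except itself
  have hAdjv : ∀ u : Fin n, u ≠ v → G.Adj u v := by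
    intro u hu
    rw [hAdj]
    exact ⟨hu, fun h => hvS h.2, fun h => hvu h.1⟩
  have hAdjv' : ∀ u : Fin n, G.Adj v u ↔ u ≠ v := by
    intro u
    constructor
    · intro h; exact fun hc => G.ne_of_adj h hc.symm
    · intro h; exact (hAdjv u h).symm
  set B : Finset (Fin n) := insert u₀ S with hBdef
  have hvB : v ∉ B := by
    simp [hBdef, hvu, hvS]
  have hBcard : B.card = m + 1 := by
    rw [hBdef, Finset.card_insert_of_notMem hu₀S, hScard]
  have hAdju : ∀ u : Fin n, G.Adj u₀ u ↔ u ∉ B := by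
    intro u
    rw [hAdj]
    simp only [hBdef, Finset.mem_insert]
    constructor
    · rintro ⟨hne, h1, h2⟩ h
      rcases h with rfl | hS
      · exact hne rfl
      · exact h1 ⟨trivial, hS⟩
    · intro h
      push_neg at h
      exact ⟨fun hc => h.1 hc.symm, fun hc => h.2 hc.2, fun hc => h.1 hc.1⟩
  -- degree of u₀
  have hdegu : graphDeg G u₀ = n - (m + 1) := by
    have hset : G.neighborSet u₀ = ↑(Finset.univ \ B) := by
      ext u
      simp only [SimpleGraph.mem_neighborSet, Finset.coe_sdiff, Set.mem_diff,
        Finset.coe_univ, Set.mem_univ, true_and, Finset.mem_coe]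
      exact hAdju u
    rw [graphDeg, hset, Set.ncard_coe_finset, Finset.card_sdiff_of_subset (Finset.subset_univ B),
      Finset.card_univ, Fintype.card_fin, hBcard]
  -- real casts
  have hn1 : ((n - 1 : ℕ) : ℝ) = (n : ℝ) - 1 := by
    have : (1:ℕ) ≤ n := by omega
    push_cast [this]; ring
  have hnm1 : ((n - (m + 1) : ℕ) : ℝ) = (n : ℝ) - (m : ℝ) - 1 := by
    have : m + 1 ≤ n := by omega
    push_cast [this]; ring
  have hnm2 : ((n - (m + 2) : ℕ) : ℝ) = (n : ℝ) - (m : ℝ) - 2 := by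
    have : m + 2 ≤ n := by omega
    push_cast [this]; ring
  have hn1pos : (0:ℝ) < (n : ℝ) - 1 := by
    have : (4:ℝ) ≤ n := by exact_mod_cast hn
    linarith
  have hnm1pos : (0:ℝ) < (n : ℝ) - (m : ℝ) - 1 := by
    have h1 : ((m:ℝ) + 3) ≤ n := by exact_mod_cast hmn
    linarith
  set c : ℝ := 1 / ((n : ℝ) - 1) with hcdef
  set d : ℝ := 1 / ((n : ℝ) - (m : ℝ) - 1) with hddef
  have hcpos : 0 < c := by positivity
  have hdpos : 0 < d := by positivity
  have hcd : c ≤ d := by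
    rw [hcdef, hddef]
    apply one_div_le_one_div_of_le hnm1pos
    have : (0:ℝ) ≤ m := by positivity
    linarith
  set μ : Fin n → ℝ := vertexMeasure G v with hμdef
  set ν : Fin n → ℝ := vertexMeasure G u₀ with hνdef
  have hμ : ∀ u, μ u = if u = v then 0 else c := by
    intro u
    rw [hμdef]
    unfold vertexMeasure
    rw [hdeg, hn1, hAdjv' u]
    by_cases h : u = v <;> simp [h, hcdef]
  have hν : ∀ u, ν u = if u ∈ B then 0 else d := by
    intro u
    rw [hνdef]
    unfold vertexMeasure
    rw [hdegu, hnm1, hAdju u]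
    by_cases h : u ∈ B <;> simp [h, hddef]
  have hμnn : ∀ u, 0 ≤ μ u := by
    intro u; rw [hμ u]; split <;> positivity
  have hνnn : ∀ u, 0 ≤ ν u := by
    intro u; rw [hν u]; split <;> positivity
  have hmin : ∀ u, min (μ u) (ν u) = if u ∈ insert v B then 0 else c := by
    intro u
    rw [hμ u, hν u]
    by_cases h1 : u = v
    · subst h1
      simp [hvB, min_eq_left hdpos.le]
    · by_cases h2 : u ∈ B
      · simp [h1, h2, min_eq_right hcpos.le]
      · simp [h1, h2, min_eq_left hcd]
  -- generic sum lemma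
  have hsum : ∀ (T : Finset (Fin n)) (r : ℝ),
      ∑ u : Fin n, (if u ∈ T then 0 else r) = ((n - T.card : ℕ) : ℝ) * r := by
    intro T r
    have hfe : Finset.univ.filter (fun u => u ∉ T) = Finset.univ \ T := by
      ext u; simp
    rw [Finset.sum_ite, Finset.sum_const_zero, Finset.sum_const, zero_add, nsmul_eq_mul, hfe,
      Finset.card_sdiff_of_subset (Finset.subset_univ T), Finset.card_univ, Fintype.card_fin]
  have hμsum : ∑ u, μ u = 1 := by
    have h0 : ∑ u, μ u = ((n - ({v} : Finset (Fin n)).card : ℕ) : ℝ) * c := by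
      rw [← hsum {v} c]
      apply Finset.sum_congr rfl
      intro u _
      rw [hμ u]
      simp
    rw [h0]
    simp only [Finset.card_singleton]
    rw [hn1, hcdef]
    field_simp
  have hνsum : ∑ u, ν u = 1 := by
    have h0 : ∑ u, ν u = ((n - B.card : ℕ) : ℝ) * d := by
      rw [← hsum B d]
      exact Finset.sum_congr rfl fun u _ => hν u
    rw [h0, hBcard, hnm1, hddef]
    field_simp
  have hvBcard : (insert v B).card = m + 2 := by
    rw [Finset.card_insert_of_notMem hvB, hBcard]
  have hminsum : ∑ u, min (μ u) (ν u) = ((n:ℝ) - m - 2) * c := by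
    have h0 : ∑ u, min (μ u) (ν u) = ((n - (insert v B).card : ℕ) : ℝ) * c := by
      rw [← hsum (insert v B) c]
      exact Finset.sum_congr rfl fun u _ => hmin u
    rw [h0, hvBcard, hnm2]
  set R : ℝ := ((m:ℝ) + 1) * c with hRdef
  have hRpos : 0 < R := by
    have : (0:ℝ) ≤ m := by positivity
    rw [hRdef]; positivity
  have hone : (1:ℝ) = ((n:ℝ) - 1) * c := by
    rw [hcdef]; field_simp
  set X : Fin n → ℝ := fun u => μ u - min (μ u) (ν u) with hXdef
  set Y : Fin n → ℝ := fun u => ν u - min (μ u) (ν u) with hYdef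
  have hXnn : ∀ u, 0 ≤ X u := fun u => sub_nonneg.2 (min_le_left _ _)
  have hYnn : ∀ u, 0 ≤ Y u := fun u => sub_nonneg.2 (min_le_right _ _)
  have hXsum : ∑ u, X u = R := by
    rw [hXdef]
    rw [Finset.sum_sub_distrib, hμsum, hminsum, hRdef, hcdef]
    field_simp
    ring
  have hYsum : ∑ u, Y u = R := by
    rw [hYdef]
    rw [Finset.sum_sub_distrib, hνsum, hminsum, hRdef, hcdef]
    field_simp
    ring
  have hXmem : ∀ u, u ∉ B → X u = 0 := by
    intro u hu
    rw [hXdef]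
    simp only
    rw [hmin u, hμ u]
    by_cases h : u = v
    · simp [h, hu]
    · simp [h, hu]
  have hYmem : ∀ u, u ∈ B → Y u = 0 := by
    intro u hu
    rw [hYdef]
    simp only
    rw [hmin u, hν u]
    have : u ∈ insert v B := Finset.mem_insert_of_mem hu
    simp [hu, this]
  -- distances are 1 on the support of X ⊗ Y
  have hXYd : ∀ u w, X u * Y w * (G.dist u w : ℝ) = X u * Y w := by
    intro u w
    by_cases hu : u ∈ B
    · by_cases hw : w ∈ B
      · rw [hYmem w hw]; ring
      · -- u ∈ B, w ∉ B : adjacent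
        have hadj : G.Adj u w := by
          rw [hAdj]
          refine ⟨fun hc => hw (hc ▸ hu), ?_, ?_⟩
          · rintro ⟨rfl, hwS⟩; exact hw (Finset.mem_insert_of_mem hwS)
          · rintro ⟨rfl, -⟩; exact hw (Finset.mem_insert_self _ _)
        rw [SimpleGraph.dist_eq_one_iff_adj.2 hadj]
        norm_num
    · rw [hXmem u hu]; ring
  have hXY0 : ∀ u, X u * Y u = 0 := by
    intro u
    by_cases hu : u ∈ B
    · rw [hYmem u hu]; ring
    · rw [hXmem u hu]; ring
  -- the optimal coupling
  set A : Fin n → Fin n → ℝ :=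
    fun u w => (if u = w then min (μ u) (ν u) else 0) + X u * Y w / R with hAdef
  have hminnn : ∀ u, 0 ≤ min (μ u) (ν u) := fun u => le_min (hμnn u) (hνnn u)
  have hAcoup : IsCoupling μ ν A := by
    refine ⟨?_, ?_, ?_⟩
    · intro u w
      rw [hAdef]
      simp only
      have h1 : (0:ℝ) ≤ if u = w then min (μ u) (ν u) else 0 := by
        split
        · exact hminnn u
        · exact le_refl 0
      have h2 : (0:ℝ) ≤ X u * Y w / R :=
        div_nonneg (mul_nonneg (hXnn u) (hYnn w)) hRpos.le
      linarith
    · intro u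
      rw [hAdef]
      simp only
      rw [Finset.sum_add_distrib, Finset.sum_ite_eq Finset.univ u (fun w => min (μ u) (ν u))]
      have h2 : ∑ w, X u * Y w / R = X u := by
        rw [← Finset.sum_div, ← Finset.mul_sum, hYsum]
        field_simp
      rw [h2]
      simp [hXdef]
    · intro w
      rw [hAdef]
      simp only
      rw [Finset.sum_add_distrib, Finset.sum_ite_eq' Finset.univ w (fun u => min (μ u) (ν u))]
      have h2 : ∑ u, X u * Y w / R = Y w := by
        rw [← Finset.sum_div, ← Finset.sum_mul, hXsum]
        field_simp
      rw [h2]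
      simp [hYdef]
  have hAcost : ∑ u, ∑ w, A u w * (G.dist u w : ℝ) = R := by
    have hterm : ∀ u, ∑ w, A u w * (G.dist u w : ℝ) = ∑ w, X u * Y w / R := by
      intro u
      apply Finset.sum_congr rfl
      intro w _
      rw [hAdef]
      simp only
      rw [add_mul]
      have h1 : (if u = w then min (μ u) (ν u) else 0) * (G.dist u w : ℝ) = 0 := by
        by_cases h : u = w
        · subst h; simp
        · simp [h]
      rw [h1, zero_add, div_mul_eq_mul_div, hXYd u w]
    rw [Finset.sum_congr rfl fun u _ => hterm u]
    have h3 : ∀ u : Fin n, ∑ w, X u * Y w / R = X u := by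
      intro u
      rw [← Finset.sum_div, ← Finset.mul_sum, hYsum, mul_div_cancel_right₀ _ hRpos.ne']
    rw [Finset.sum_congr rfl fun u _ => h3 u, hXsum]
  -- distances ≥ 1 off the diagonal (connectivity)
  have hdist1 : ∀ u w : Fin n, u ≠ w → (1:ℝ) ≤ (G.dist u w : ℝ) := by
    intro u w hne
    have hreach : G.Reachable u w := by
      by_cases hu : u = v
      · subst hu
        exact ((hAdjv w (Ne.symm hne)).symm).reachable
      · by_cases hw : w = v
        · subst hw
          exact (hAdjv u hu).reachable
        · exact ((hAdjv u hu).reachable).trans ((hAdjv w hw).symm).reachable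
    have h0 : G.dist u w ≠ 0 := by
      intro hc
      rcases SimpleGraph.dist_eq_zero_iff_eq_or_not_reachable.1 hc with h | h
      · exact hne h
      · exact h hreach
    exact_mod_cast Nat.one_le_iff_ne_zero.2 h0
  -- lower bound for any coupling
  have hlb : ∀ b ∈ {cc : ℝ | ∃ A : Fin n → Fin n → ℝ, IsCoupling μ ν A ∧
      cc = ∑ u : Fin n, ∑ w : Fin n, A u w * (G.dist u w : ℝ)}, R ≤ b := by
    rintro b ⟨A', ⟨hA0, hA1, hA2⟩, rfl⟩
    have hdiag : ∀ u, A' u u ≤ min (μ u) (ν u) := by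
      intro u
      refine le_min ?_ ?_
      · rw [← hA1 u]
        exact Finset.single_le_sum (fun w _ => hA0 u w) (Finset.mem_univ u)
      · rw [← hA2 u]
        exact Finset.single_le_sum (fun w _ => hA0 w u) (Finset.mem_univ u)
    have step1 : ∀ u, ∑ w, (if u = w then 0 else A' u w) ≤
        ∑ w, A' u w * (G.dist u w : ℝ) := by
      intro u
      apply Finset.sum_le_sum
      intro w _
      by_cases h : u = w
      · subst h
        simp only [if_pos rfl]
        exact mul_nonneg (hA0 u u) (Nat.cast_nonneg _)
      · simp only [h, if_false]
        have := hdist1 u w h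
        nlinarith [hA0 u w]
    have step2 : ∀ u, ∑ w, (if u = w then 0 else A' u w) = μ u - A' u u := by
      intro u
      have : ∀ w, (if u = w then 0 else A' u w)
          = A' u w - (if u = w then A' u w else 0) := by
        intro w; split <;> ring
      rw [Finset.sum_congr rfl fun w _ => this w, Finset.sum_sub_distrib,
        Finset.sum_ite_eq Finset.univ u (fun w => A' u w), hA1 u]
      simp
    have hchain : R ≤ ∑ u, (μ u - A' u u) := by
      rw [Finset.sum_sub_distrib, hμsum]
      have : ∑ u, A' u u ≤ ∑ u, min (μ u) (ν u) :=
        Finset.sum_le_sum fun u _ => hdiag u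
      rw [hminsum] at this
      rw [hRdef]
      have hid : ((m:ℝ)+1)*c + ((n:ℝ)-(m:ℝ)-2)*c = ((n:ℝ)-1)*c := by ring
      have hone2 : ((n:ℝ)-1)*c = 1 := by rw [hcdef]; field_simp
      linarith
    calc R ≤ ∑ u, (μ u - A' u u) := hchain
      _ = ∑ u, ∑ w, (if u = w then 0 else A' u w) :=
          (Finset.sum_congr rfl fun u _ => (step2 u)).symm
      _ ≤ ∑ u, ∑ w, A' u w * (G.dist u w : ℝ) :=
          Finset.sum_le_sum fun u _ => step1 u
  have hmemR : R ∈ {cc : ℝ | ∃ A : Fin n → Fin n → ℝ, IsCoupling μ ν A ∧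
      cc = ∑ u : Fin n, ∑ w : Fin n, A u w * (G.dist u w : ℝ)} :=
    ⟨A, hAcoup, hAcost.symm⟩
  have hW : wassersteinDist G μ ν = R := by
    unfold wassersteinDist
    exact le_antisymm (csInf_le ⟨R, hlb⟩ hmemR) (le_csInf ⟨R, hmemR⟩ hlb)
  unfold ricciCurv
  rw [← hμdef, ← hνdef, hW, SimpleGraph.dist_eq_one_iff_adj.2 hv]
  rw [hRdef, hcdef]
  push_cast
  field_simp
  ring
end

section
/- Let G = K_n − C_m with n ≥ 6 and 3 ≤ m ≤ n−1. For any vertex v of degree n−1 and any adjacent cycle vertex u (of degree n−3), the Ollivier–Ricci curvature equals κ(v, u) = (n−4)/(n−1). -/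
open Finset
open scoped Classical

private lemma aux_arith1 (x : ℝ) (h1 : 0 < x - 1) (h3 : 0 < x - 3) :
    1/(x-1) + (1/((x-1)*(x-3)) + 1/((x-1)*(x-3))) = 1/(x-3) := by
  field_simp
  ring_nf
  try tauto

private lemma aux_arith2 (x : ℝ) (h1 : 0 < x - 1) (h3 : 0 < x - 3) :
    3*(1/(x-1)) - 1/((x-1)*(x-3)) * ((x - 4) + (x - 4)) = 1/(x-3) := by
  field_simp
  ring_nf
  try tauto

private lemma aux_arith3 (x : ℝ) (h1 : 0 < x - 1) (h3 : 0 < x - 3) :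
    1/(x-1) - 1/((x-1)*(x-3)) * (x - 4) = 1/((x-1)*(x-3)) := by
  field_simp
  ring_nf
  try tauto

private lemma aux_arith4 (x : ℝ) (h1 : 0 < x - 1) (h3 : 0 < x - 3) :
    1/(x-1) - 1/((x-1)*(x-3)) * 2 = (x-5)/((x-1)*(x-3)) := by
  field_simp
  ring_nf
  try tauto

private lemma aux_final (x : ℝ) (h1 : 0 < x - 1) :
    1 - 3*(1/(x-1)) = (x-4)/(x-1) := by
  field_simp
  ring_nf
  try tauto

private lemma aux_sum_ite_and {N : ℕ} (z : Fin N) (Pr : Prop) [Decidable Pr] (r : ℝ) :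
    (∑ x : Fin N, if x = z ∧ Pr then r else 0) = if Pr then r else 0 := by
  by_cases hPr : Pr
  · simp [hPr]
  · simp [hPr]

set_option maxHeartbeats 3200000

theorem stmt10 (n m : ℕ) (hn : 6 ≤ n) (hm3 : 3 ≤ m) (hmn : m ≤ n - 1)
    (c : ZMod m → Fin n) (hc : Function.Injective c)
    (G : SimpleGraph (Fin n))
    (hG : G = ⊤ \ SimpleGraph.fromEdgeSet {e | ∃ i : ZMod m, e = s(c i, c (i + 1))})
    (v u : Fin n) (hu : u ∈ Set.range c) (hadj : G.Adj v u)
    (hdv : graphDeg G v = n - 1) (hdu : graphDeg G u = n - 3) :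
    ricciCurv G v u = ((n : ℝ) - 4) / ((n : ℝ) - 1) := by
  classical
  haveI : NeZero m := ⟨by omega⟩
  have hnR : (6:ℝ) ≤ (n:ℝ) := by exact_mod_cast hn
  have hn1 : (0:ℝ) < (n:ℝ) - 1 := by linarith
  have hn3 : (0:ℝ) < (n:ℝ) - 3 := by linarith
  have h10 : (1 : ZMod m) ≠ 0 := by
    intro h
    have h2 : ((1:ℕ) : ZMod m) = 0 := by exact_mod_cast h
    have := Nat.le_of_dvd one_pos ((ZMod.natCast_eq_zero_iff 1 m).mp h2)
    omega
  have h20 : (2 : ZMod m) ≠ 0 := by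
    intro h
    have h2 : ((2:ℕ) : ZMod m) = 0 := by exact_mod_cast h
    have := Nat.le_of_dvd two_pos ((ZMod.natCast_eq_zero_iff 2 m).mp h2)
    omega
  -- adjacency characterization
  have hAdj : ∀ x y : Fin n, G.Adj x y ↔
      (x ≠ y ∧ ¬ ∃ j : ZMod m, s(x, y) = s(c j, c (j+1))) := by
    intro x y
    rw [hG]
    simp only [SimpleGraph.sdiff_adj, SimpleGraph.top_adj, SimpleGraph.fromEdgeSet_adj,
      Set.mem_setOf_eq]
    tauto
  -- v is adjacent to everything else
  have hvadj : ∀ x : Fin n, x ≠ v → G.Adj v x := by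
    intro x hx
    have hfin : (G.neighborSet v).toFinset = Finset.univ.erase v := by
      apply Finset.eq_of_subset_of_card_le
      · intro z hz
        rw [Set.mem_toFinset, SimpleGraph.mem_neighborSet] at hz
        exact Finset.mem_erase.mpr ⟨hz.ne', Finset.mem_univ z⟩
      · have hcard : (G.neighborSet v).toFinset.card = graphDeg G v := by
          rw [graphDeg, Set.ncard_eq_toFinset_card']
        rw [Finset.card_erase_of_mem (Finset.mem_univ v), Finset.card_univ, Fintype.card_fin]
        omega
    have hx2 : x ∈ (G.neighborSet v).toFinset := by
      rw [hfin]; exact Finset.mem_erase.mpr ⟨hx, Finset.mem_univ x⟩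
    rw [Set.mem_toFinset, SimpleGraph.mem_neighborSet] at hx2
    exact hx2
  -- v is not on the cycle
  have hvnc : ∀ j : ZMod m, c j ≠ v := by
    intro j hj
    have hne : c (j+1) ≠ v := by
      intro h
      have h2 : j + 1 = j := hc (by rw [h, hj])
      exact h10 (by linear_combination h2)
    have hadj2 := hvadj (c (j+1)) hne
    rw [hAdj] at hadj2
    exact hadj2.2 ⟨j, by rw [hj]⟩
  -- adjacency at a cycle vertex
  have hAdjc : ∀ (j : ZMod m) (y : Fin n),
      G.Adj (c j) y ↔ (y ≠ c j ∧ y ≠ c (j - 1) ∧ y ≠ c (j + 1)) := by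
    intro j y
    rw [hAdj]
    constructor
    · rintro ⟨hne, hnex⟩
      refine ⟨Ne.symm hne, ?_, ?_⟩
      · intro h
        exact hnex ⟨j - 1, by rw [h, sub_add_cancel, Sym2.eq_swap]⟩
      · intro h
        exact hnex ⟨j, by rw [h]⟩
    · rintro ⟨h1, h2, h3⟩
      refine ⟨Ne.symm h1, ?_⟩
      rintro ⟨i, hi⟩
      rw [Sym2.eq_iff] at hi
      rcases hi with ⟨hji, hyi⟩ | ⟨hji, hyi⟩
      · exact h3 (by rw [hyi, hc hji])
      · have hij : i = j - 1 := by rw [hc hji]; ring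
        exact h2 (by rw [hyi, hij])
  obtain ⟨i0, hi0⟩ := hu
  subst hi0
  -- names for the relevant cycle vertices
  set p : Fin n := c (i0 - 1) with hp_def
  set q : Fin n := c (i0 + 1) with hq_def
  set p2 : Fin n := c (i0 - 2) with hp2_def
  set q2 : Fin n := c (i0 + 2) with hq2_def
  have hAdju : ∀ y, G.Adj (c i0) y ↔ (y ≠ c i0 ∧ y ≠ p ∧ y ≠ q) := fun y => hAdjc i0 y
  have hAdjp : ∀ y, G.Adj p y ↔ (y ≠ p ∧ y ≠ p2 ∧ y ≠ c i0) := by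
    intro y
    have := hAdjc (i0 - 1) y
    rwa [show i0 - 1 - 1 = i0 - 2 by ring, show i0 - 1 + 1 = i0 by ring] at this
  have hAdjq : ∀ y, G.Adj q y ↔ (y ≠ q ∧ y ≠ c i0 ∧ y ≠ q2) := by
    intro y
    have := hAdjc (i0 + 1) y
    rwa [show i0 + 1 - 1 = i0 by ring, show i0 + 1 + 1 = i0 + 2 by ring] at this
  -- distinctness
  have hup : c i0 ≠ p := fun h => h10 (by linear_combination hc h)
  have huq : c i0 ≠ q := fun h => h10 (by linear_combination - hc h)
  have hpq : p ≠ q := fun h => h20 (by linear_combination - hc h)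
  have hvu : v ≠ c i0 := hadj.ne
  have hvp : v ≠ p := Ne.symm (hvnc (i0 - 1))
  have hvq : v ≠ q := Ne.symm (hvnc (i0 + 1))
  have hvp2 : v ≠ p2 := Ne.symm (hvnc (i0 - 2))
  have hvq2 : v ≠ q2 := Ne.symm (hvnc (i0 + 2))
  -- the measures
  set α : ℝ := 1/((n:ℝ)-1) with hα_def
  set β : ℝ := 1/((n:ℝ)-3) with hβ_def
  set d2 : ℝ := 1/(((n:ℝ)-1)*((n:ℝ)-3)) with hd2_def
  have hαpos : 0 < α := by rw [hα_def]; positivity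
  have hd2pos : 0 < d2 := by rw [hd2_def]; positivity
  have hμ : ∀ x, vertexMeasure G v x = if x = v then 0 else α := by
    intro x
    simp only [vertexMeasure]
    by_cases hx : x = v
    · subst hx; simp
    · rw [if_pos (hvadj x hx), if_neg hx, hdv, hα_def,
        Nat.cast_sub (by omega : 1 ≤ n), Nat.cast_one]
  have hν : ∀ x, vertexMeasure G (c i0) x
      = if x = c i0 ∨ x = p ∨ x = q then 0 else β := by
    intro x
    simp only [vertexMeasure]
    by_cases hx : x = c i0 ∨ x = p ∨ x = q
    · rw [if_pos hx, if_neg]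
      intro h
      rw [hAdju] at h
      tauto
    · push_neg at hx
      rw [if_pos ((hAdju x).mpr ⟨hx.1, hx.2.1, hx.2.2⟩), if_neg (by tauto), hdu, hβ_def,
        Nat.cast_sub (by omega : 3 ≤ n), Nat.cast_ofNat]
  -- the common support
  set S : Finset (Fin n) := Finset.univ \ {v, c i0, p, q} with hS_def
  have hSmem : ∀ x, x ∈ S ↔ (x ≠ v ∧ x ≠ c i0 ∧ x ≠ p ∧ x ≠ q) := by
    intro x
    rw [hS_def]
    simp [Finset.mem_sdiff, Finset.mem_insert, not_or]
  have hvS : v ∉ S := by rw [hSmem]; tauto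
  have huS : c i0 ∉ S := by rw [hSmem]; tauto
  have hpS : p ∉ S := by rw [hSmem]; tauto
  have hqS : q ∉ S := by rw [hSmem]; tauto
  have hquad : ({v, c i0, p, q} : Finset (Fin n)).card = 4 := by
    rw [Finset.card_insert_of_notMem (by simp [hvu, hvp, hvq]),
      Finset.card_insert_of_notMem (by simp [hup, huq]),
      Finset.card_insert_of_notMem (by simp [hpq]), Finset.card_singleton]
  have hScard : S.card = n - 4 := by
    rw [hS_def, Finset.card_sdiff_of_subset (Finset.subset_univ _), Finset.card_univ,
      Fintype.card_fin, hquad]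
  set ka : ℕ := (S \ {p2}).card with hka_def
  set kb : ℕ := (S \ {q2}).card with hkb_def
  set ia : ℝ := if p2 ∈ S then (1:ℝ) else 0 with hia_def
  set ib : ℝ := if q2 ∈ S then (1:ℝ) else 0 with hib_def
  have hkaS : ∀ (z : Fin n) (k : ℕ), k = (S \ {z}).card →
      (k : ℝ) + (if z ∈ S then (1:ℝ) else 0) = (n:ℝ) - 4 := by
    intro z k hk
    by_cases hz : z ∈ S
    · have h1 : (S \ {z}).card = S.card - 1 := by
        rw [Finset.card_sdiff_of_subset (by simp [hz])]
        simp
      have h5 : n - 4 - 1 = n - 5 := by omega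
      rw [hk, h1, hScard, if_pos hz, h5, Nat.cast_sub (by omega : 5 ≤ n)]
      push_cast
      ring
    · have h1 : S \ {z} = S := by
        ext w
        simp only [Finset.mem_sdiff, Finset.mem_singleton, and_iff_left_iff_imp]
        intro hw he
        exact hz (he ▸ hw)
      rw [hk, h1, hScard, if_neg hz, Nat.cast_sub (by omega : 4 ≤ n)]
      push_cast
      ring
  have hka : (ka : ℝ) + ia = (n:ℝ) - 4 := hkaS p2 ka hka_def
  have hkb : (kb : ℝ) + ib = (n:ℝ) - 4 := hkaS q2 kb hkb_def
  have hia01 : 0 ≤ ia ∧ ia ≤ 1 := by rw [hia_def]; split <;> norm_num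
  have hib01 : 0 ≤ ib ∧ ib ≤ 1 := by rw [hib_def]; split <;> norm_num
  set ra : ℝ := α - d2 * ka with hra_def
  set rb : ℝ := α - d2 * kb with hrb_def
  set ru : ℝ := α - d2 * (ia + ib) with hru_def
  have hkaR : (ka : ℝ) ≤ (n:ℝ) - 4 := by linarith [hia01.1]
  have hkbR : (kb : ℝ) ≤ (n:ℝ) - 4 := by linarith [hib01.1]
  have hra0 : 0 ≤ ra := by
    rw [hra_def, hα_def, hd2_def]
    have h1 := aux_arith3 n hn1 hn3
    have h2 : (1:ℝ)/(((n:ℝ)-1)*((n:ℝ)-3)) * ka ≤ 1/(((n:ℝ)-1)*((n:ℝ)-3)) * ((n:ℝ)-4) :=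
      mul_le_mul_of_nonneg_left hkaR (by positivity)
    have h3 : (0:ℝ) < 1/(((n:ℝ)-1)*((n:ℝ)-3)) := by positivity
    linarith
  have hrb0 : 0 ≤ rb := by
    rw [hrb_def, hα_def, hd2_def]
    have h1 := aux_arith3 n hn1 hn3
    have h2 : (1:ℝ)/(((n:ℝ)-1)*((n:ℝ)-3)) * kb ≤ 1/(((n:ℝ)-1)*((n:ℝ)-3)) * ((n:ℝ)-4) :=
      mul_le_mul_of_nonneg_left hkbR (by positivity)
    have h3 : (0:ℝ) < 1/(((n:ℝ)-1)*((n:ℝ)-3)) := by positivity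
    linarith
  have hru0 : 0 ≤ ru := by
    rw [hru_def, hα_def, hd2_def]
    have h1 := aux_arith4 n hn1 hn3
    have h2 : (1:ℝ)/(((n:ℝ)-1)*((n:ℝ)-3)) * (ia + ib) ≤ 1/(((n:ℝ)-1)*((n:ℝ)-3)) * 2 :=
      mul_le_mul_of_nonneg_left (by linarith [hia01.2, hib01.2]) (by positivity)
    have h3 : (0:ℝ) ≤ ((n:ℝ)-5)/(((n:ℝ)-1)*((n:ℝ)-3)) :=
      div_nonneg (by linarith) (by positivity)
    linarith
  have hsum3 : ra + rb + ru = β := by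
    have e1 : ra + rb + ru = 3*α - d2 * (((ka:ℝ) + ia) + ((kb:ℝ) + ib)) := by
      rw [hra_def, hrb_def, hru_def]; ring
    rw [e1, hka, hkb, hα_def, hd2_def, hβ_def]
    exact aux_arith2 n hn1 hn3
  have hαd : α + (d2 + d2) = β := by
    rw [hα_def, hd2_def, hβ_def]
    exact aux_arith1 n hn1 hn3
  -- handy sum lemmas
  have hmemT : ∀ (T : Finset (Fin n)) (r : ℝ),
      (∑ y : Fin n, if y ∈ T then r else 0) = T.card * r := by
    intro T r
    rw [Finset.sum_ite_mem, Finset.univ_inter, Finset.sum_const, nsmul_eq_mul]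
  have hsingle : ∀ (w : Fin n) (r : ℝ), (∑ y : Fin n, if y = w then r else 0) = r := by
    intro w r
    rw [Finset.sum_ite_eq' Finset.univ w (fun _ => r), if_pos (Finset.mem_univ w)]
  -- the coupling
  set Acp : Fin n → Fin n → ℝ := fun x y =>
    (if x = y ∧ x ∈ S then α else 0) +
    (if x = p ∧ y ∈ S \ {p2} then d2 else 0) +
    (if x = p ∧ y = v then ra else 0) +
    (if x = q ∧ y ∈ S \ {q2} then d2 else 0) +
    (if x = q ∧ y = v then rb else 0) +
    (if x = c i0 ∧ y = p2 ∧ p2 ∈ S then d2 else 0) +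
    (if x = c i0 ∧ y = q2 ∧ q2 ∈ S then d2 else 0) +
    (if x = c i0 ∧ y = v then ru else 0) with hAcp_def
  have hite0 : ∀ (P : Prop) (inst : Decidable P) (r : ℝ), 0 ≤ r → 0 ≤ (@ite _ P inst r 0) := by
    intro P inst r hr
    split <;> simp [hr]
  have hAnn : ∀ x y, 0 ≤ Acp x y := by
    intro x y
    rw [hAcp_def]
    refine add_nonneg (add_nonneg (add_nonneg (add_nonneg (add_nonneg (add_nonneg
      (add_nonneg ?_ ?_) ?_) ?_) ?_) ?_) ?_) ?_
    · exact hite0 _ _ _ hαpos.le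
    · exact hite0 _ _ _ hd2pos.le
    · exact hite0 _ _ _ hra0
    · exact hite0 _ _ _ hd2pos.le
    · exact hite0 _ _ _ hrb0
    · exact hite0 _ _ _ hd2pos.le
    · exact hite0 _ _ _ hd2pos.le
    · exact hite0 _ _ _ hru0
  -- row sums
  have hrow : ∀ x, ∑ y, Acp x y = vertexMeasure G v x := by
    intro x
    rw [hμ x, hAcp_def]
    simp only [Finset.sum_add_distrib]
    by_cases hxp : x = p
    · subst hxp
      rw [if_neg (Ne.symm hvp)]
      simp only [hpS, hpq, Ne.symm hup, eq_self_iff_true, true_and, false_and, and_false,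
        if_false, Finset.sum_const_zero, add_zero, zero_add]
      rw [hmemT, hsingle, ← hka_def, hra_def]
      push_cast
      ring
    · by_cases hxq : x = q
      · subst hxq
        rw [if_neg (Ne.symm hvq)]
        simp only [hqS, hxp, Ne.symm hpq, Ne.symm huq, eq_self_iff_true, true_and, false_and,
          and_false, if_false, Finset.sum_const_zero, add_zero, zero_add]
        rw [hmemT, hsingle, ← hkb_def, hrb_def]
        push_cast
        ring
      · by_cases hxu : x = c i0
        · subst hxu
          rw [if_neg (Ne.symm hvu)]
          simp only [huS, hup, huq, eq_self_iff_true, true_and, false_and, and_false,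
            if_false, Finset.sum_const_zero, add_zero, zero_add]
          have e2 : (∑ y : Fin n, if y = p2 ∧ p2 ∈ S then d2 else 0) = ia * d2 := by
            by_cases hp2S : p2 ∈ S
            · rw [hia_def, if_pos hp2S, one_mul]
              simp only [hp2S, and_true]
              exact hsingle p2 d2
            · rw [hia_def, if_neg hp2S, zero_mul]
              simp [hp2S]
          have e3 : (∑ y : Fin n, if y = q2 ∧ q2 ∈ S then d2 else 0) = ib * d2 := by
            by_cases hq2S : q2 ∈ S
            · rw [hib_def, if_pos hq2S, one_mul]
              simp only [hq2S, and_true]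
              exact hsingle q2 d2
            · rw [hib_def, if_neg hq2S, zero_mul]
              simp [hq2S]
          rw [e2, e3, hsingle, hru_def]
          ring
        · -- generic row
          simp only [hxp, hxq, hxu, false_and, if_false, Finset.sum_const_zero,
            add_zero, zero_add]
          by_cases hxS : x ∈ S
          · rw [if_neg (((hSmem x).mp hxS).1)]
            simp [hxS]
          · have hxv : x = v := by
              by_contra hxv
              exact hxS ((hSmem x).mpr ⟨hxv, hxu, hxp, hxq⟩)
            rw [if_pos hxv]
            simp [hxS]
  -- column sums
  have hcol : ∀ y, ∑ x, Acp x y = vertexMeasure G (c i0) y := by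
    intro y
    rw [hν y, hAcp_def]
    simp only [Finset.sum_add_distrib]
    have c1 : (∑ x : Fin n, if x = y ∧ x ∈ S then α else 0)
        = if y ∈ S then α else 0 := by
      by_cases hyS : y ∈ S
      · rw [if_pos hyS]
        have e : ∀ x : Fin n, (if x = y ∧ x ∈ S then α else 0) = (if x = y then α else 0) := by
          intro x
          by_cases hxy : x = y
          · subst hxy; simp [hyS]
          · simp [hxy]
        rw [Finset.sum_congr rfl (fun x _ => e x)]
        exact hsingle y α
      · rw [if_neg hyS]
        have e : ∀ x : Fin n, (if x = y ∧ x ∈ S then α else 0) = 0 := by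
          intro x
          rw [if_neg]
          rintro ⟨rfl, hxS⟩
          exact hyS hxS
        simp only [e, Finset.sum_const_zero]
    rw [c1, aux_sum_ite_and p _ d2, aux_sum_ite_and p _ ra, aux_sum_ite_and q _ d2,
      aux_sum_ite_and q _ rb, aux_sum_ite_and (c i0) _ d2, aux_sum_ite_and (c i0) _ d2,
      aux_sum_ite_and (c i0) _ ru]
    by_cases hyv : y = v
    · rw [hyv]
      rw [if_neg (show ¬(v = c i0 ∨ v = p ∨ v = q) by push_neg; exact ⟨hvu, hvp, hvq⟩)]
      rw [if_neg hvS, if_neg (fun h => hvS (Finset.mem_sdiff.mp h).1), if_pos rfl,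
        if_neg (fun h => hvS (Finset.mem_sdiff.mp h).1), if_pos rfl,
        if_neg (by rintro ⟨h1, _⟩; exact hvp2 h1), if_neg (by rintro ⟨h1, _⟩; exact hvq2 h1),
        if_pos rfl]
      linarith [hsum3]
    · by_cases hyS : y ∈ S
      · obtain ⟨hy1, hy2, hy3, hy4⟩ := (hSmem y).mp hyS
        rw [if_neg (show ¬(y = c i0 ∨ y = p ∨ y = q) by push_neg; exact ⟨hy2, hy3, hy4⟩)]
        have t2 : (if y ∈ S \ {p2} then d2 else 0) + (if y = p2 ∧ p2 ∈ S then d2 else 0)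
            = d2 := by
          by_cases hyp2 : y = p2
          · rw [if_neg (by simp [Finset.mem_sdiff, hyp2]), if_pos ⟨hyp2, hyp2 ▸ hyS⟩, zero_add]
          · rw [if_pos (Finset.mem_sdiff.mpr ⟨hyS, by simp [hyp2]⟩),
              if_neg (by rintro ⟨h1, _⟩; exact hyp2 h1), add_zero]
        have t3 : (if y ∈ S \ {q2} then d2 else 0) + (if y = q2 ∧ q2 ∈ S then d2 else 0)
            = d2 := by
          by_cases hyq2 : y = q2
          · rw [if_neg (by simp [Finset.mem_sdiff, hyq2]), if_pos ⟨hyq2, hyq2 ▸ hyS⟩, zero_add]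
          · rw [if_pos (Finset.mem_sdiff.mpr ⟨hyS, by simp [hyq2]⟩),
              if_neg (by rintro ⟨h1, _⟩; exact hyq2 h1), add_zero]
        rw [if_pos hyS, if_neg hy1, if_neg hy1, if_neg hy1]
        linarith [hαd, t2, t3]
      · have hy : y = c i0 ∨ y = p ∨ y = q := by
          by_contra hyy
          push_neg at hyy
          exact hyS ((hSmem y).mpr ⟨hyv, hyy.1, hyy.2.1, hyy.2.2⟩)
        have hnp2 : ¬ (y = p2 ∧ p2 ∈ S) := by
          rintro ⟨h1', h2'⟩
          obtain ⟨_, e2', e3', e4'⟩ := (hSmem p2).mp h2'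
          rcases hy with rfl | rfl | rfl
          exacts [e2' h1'.symm, e3' h1'.symm, e4' h1'.symm]
        have hnq2 : ¬ (y = q2 ∧ q2 ∈ S) := by
          rintro ⟨h1', h2'⟩
          obtain ⟨_, e2', e3', e4'⟩ := (hSmem q2).mp h2'
          rcases hy with rfl | rfl | rfl
          exacts [e2' h1'.symm, e3' h1'.symm, e4' h1'.symm]
        rw [if_pos hy, if_neg hyS, if_neg (fun h => hyS (Finset.mem_sdiff.mp h).1),
          if_neg hyv, if_neg (fun h => hyS (Finset.mem_sdiff.mp h).1), if_neg hyv,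
          if_neg hnp2, if_neg hnq2, if_neg hyv]
        ring
  -- diagonal of the coupling
  have hdiagA : ∀ x : Fin n, Acp x x = (if x ∈ S then α else 0) := by
    intro x
    simp only [hAcp_def]
    have a2 : (if x = p ∧ x ∈ S \ {p2} then d2 else 0) = 0 := by
      rw [if_neg]; rintro ⟨rfl, hx⟩; exact hpS (Finset.mem_sdiff.mp hx).1
    have a3 : (if x = p ∧ x = v then ra else 0) = 0 := by
      rw [if_neg]; rintro ⟨rfl, h⟩; exact hvp h.symm
    have a4 : (if x = q ∧ x ∈ S \ {q2} then d2 else 0) = 0 := by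
      rw [if_neg]; rintro ⟨rfl, hx⟩; exact hqS (Finset.mem_sdiff.mp hx).1
    have a5 : (if x = q ∧ x = v then rb else 0) = 0 := by
      rw [if_neg]; rintro ⟨rfl, h⟩; exact hvq h.symm
    have a6 : (if x = c i0 ∧ x = p2 ∧ p2 ∈ S then d2 else 0) = 0 := by
      rw [if_neg]; rintro ⟨rfl, h1, h2⟩; exact huS (h1 ▸ h2)
    have a7 : (if x = c i0 ∧ x = q2 ∧ q2 ∈ S then d2 else 0) = 0 := by
      rw [if_neg]; rintro ⟨rfl, h1, h2⟩; exact huS (h1 ▸ h2)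
    have a8 : (if x = c i0 ∧ x = v then ru else 0) = 0 := by
      rw [if_neg]; rintro ⟨rfl, h⟩; exact hvu h.symm
    rw [a2, a3, a4, a5, a6, a7, a8]
    simp
  -- transport only along edges
  have hterm : ∀ x y, Acp x y * (G.dist x y : ℝ)
      = Acp x y - (if x = y ∧ x ∈ S then α else 0) := by
    intro x y
    by_cases hxy : x = y
    · subst hxy
      rw [SimpleGraph.dist_self, Nat.cast_zero, mul_zero, hdiagA x]
      simp
    · rw [if_neg (fun h => hxy h.1), sub_zero]
      by_cases hz : Acp x y = 0
      · rw [hz, zero_mul]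
      · have hadjxy : G.Adj x y := by
          by_contra hnadj
          apply hz
          simp only [hAcp_def]
          have b1 : (if x = y ∧ x ∈ S then α else 0) = 0 := if_neg (fun h => hxy h.1)
          have b2 : (if x = p ∧ y ∈ S \ {p2} then d2 else 0) = 0 := by
            rw [if_neg]; rintro ⟨rfl, hy⟩
            obtain ⟨hyS', hyp2⟩ := Finset.mem_sdiff.mp hy
            obtain ⟨_, hy2, hy3, _⟩ := (hSmem y).mp hyS'
            exact hnadj ((hAdjp y).mpr ⟨hy3, by simpa using hyp2, hy2⟩)
          have b3 : (if x = p ∧ y = v then ra else 0) = 0 := by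
            rw [if_neg]; rintro ⟨rfl, rfl⟩
            exact hnadj (hvadj p (Ne.symm hvp)).symm
          have b4 : (if x = q ∧ y ∈ S \ {q2} then d2 else 0) = 0 := by
            rw [if_neg]; rintro ⟨rfl, hy⟩
            obtain ⟨hyS', hyq2⟩ := Finset.mem_sdiff.mp hy
            obtain ⟨_, hy2, _, hy4⟩ := (hSmem y).mp hyS'
            exact hnadj ((hAdjq y).mpr ⟨hy4, hy2, by simpa using hyq2⟩)
          have b5 : (if x = q ∧ y = v then rb else 0) = 0 := by
            rw [if_neg]; rintro ⟨rfl, rfl⟩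
            exact hnadj (hvadj q (Ne.symm hvq)).symm
          have b6 : (if x = c i0 ∧ y = p2 ∧ p2 ∈ S then d2 else 0) = 0 := by
            rw [if_neg]; rintro ⟨rfl, rfl, h2⟩
            obtain ⟨_, e2', e3', e4'⟩ := (hSmem p2).mp h2
            exact hnadj ((hAdju p2).mpr ⟨e2', e3', e4'⟩)
          have b7 : (if x = c i0 ∧ y = q2 ∧ q2 ∈ S then d2 else 0) = 0 := by
            rw [if_neg]; rintro ⟨rfl, rfl, h2⟩
            obtain ⟨_, e2', e3', e4'⟩ := (hSmem q2).mp h2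
            exact hnadj ((hAdju q2).mpr ⟨e2', e3', e4'⟩)
          have b8 : (if x = c i0 ∧ y = v then ru else 0) = 0 := by
            rw [if_neg]; rintro ⟨rfl, rfl⟩
            exact hnadj hadj.symm
          rw [b1, b2, b3, b4, b5, b6, b7, b8]
          ring
        rw [SimpleGraph.dist_eq_one_iff_adj.mpr hadjxy, Nat.cast_one, mul_one]
  -- total cost of the coupling
  have hsum_diag : ∑ x : Fin n, (if x ∈ S then α else 0) = ((n:ℝ) - 4) * α := by
    rw [hmemT, hScard, Nat.cast_sub (by omega : 4 ≤ n)]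
    push_cast
    ring
  have hsum_mu : ∑ x : Fin n, vertexMeasure G v x = ((n:ℝ) - 1) * α := by
    have e : ∀ x : Fin n, vertexMeasure G v x = α - (if x = v then α else 0) := by
      intro x; rw [hμ x]; by_cases hx : x = v <;> simp [hx]
    rw [Finset.sum_congr rfl (fun x _ => e x), Finset.sum_sub_distrib, Finset.sum_const,
      Finset.card_univ, Fintype.card_fin, nsmul_eq_mul, hsingle v α]
    ring
  have hcost : ∑ x : Fin n, ∑ y : Fin n, Acp x y * (G.dist x y : ℝ) = 3 * α := by
    have e1 : ∀ x : Fin n, ∑ y : Fin n, Acp x y * (G.dist x y:ℝ)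
        = vertexMeasure G v x - (if x ∈ S then α else 0) := by
      intro x
      rw [Finset.sum_congr rfl (fun y _ => hterm x y), Finset.sum_sub_distrib, hrow x]
      congr 1
      by_cases hxS : x ∈ S
      · simp [hxS]
      · simp [hxS]
    rw [Finset.sum_congr rfl (fun x _ => e1 x), Finset.sum_sub_distrib, hsum_mu, hsum_diag]
    ring
  clear_value Acp ra rb ru ia ib ka kb S d2 β α
  -- lower bound for any coupling
  have hreach : ∀ z : Fin n, G.Reachable v z := by
    intro z
    by_cases hz : z = v
    · rw [hz]
    · exact (hvadj z hz).reachable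
  have hdist1 : ∀ x y : Fin n, x ≠ y → (1:ℝ) ≤ (G.dist x y : ℝ) := by
    intro x y hxy
    have h0 : 0 < G.dist x y := ((hreach x).symm.trans (hreach y)).pos_dist_of_ne hxy
    exact_mod_cast h0
  have hlb : ∀ r ∈ {r : ℝ | ∃ B : Fin n → Fin n → ℝ,
      IsCoupling (vertexMeasure G v) (vertexMeasure G (c i0)) B ∧
      r = ∑ x : Fin n, ∑ y : Fin n, B x y * (G.dist x y : ℝ)}, 3 * α ≤ r := by
    rintro r ⟨B, ⟨hB0, hBrow, hBcol⟩, rfl⟩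
    have hdiagB : ∀ x : Fin n, (x = c i0 ∨ x = p ∨ x = q) → B x x = 0 := by
      intro x hx
      have h1 : B x x ≤ ∑ z : Fin n, B z x :=
        Finset.single_le_sum (fun z _ => hB0 z x) (Finset.mem_univ x)
      rw [hBcol x, hν x, if_pos hx] at h1
      exact le_antisymm h1 (hB0 x x)
    have hrowge : ∀ x : Fin n, x ≠ v → (x = c i0 ∨ x = p ∨ x = q) →
        α ≤ ∑ y : Fin n, B x y * (G.dist x y : ℝ) := by
      intro x hxv hx
      have h2 : ∑ y : Fin n, (if y = x then 0 else B x y)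
          ≤ ∑ y : Fin n, B x y * (G.dist x y:ℝ) := by
        apply Finset.sum_le_sum
        intro y _
        by_cases hyx : y = x
        · subst hyx
          simp [SimpleGraph.dist_self]
        · rw [if_neg hyx]
          have h3 := hdist1 x y (Ne.symm hyx)
          nlinarith [hB0 x y]
      have h4 : ∑ y : Fin n, (if y = x then 0 else B x y)
          = (∑ y : Fin n, B x y) - B x x := by
        have e : ∀ y : Fin n, (if y = x then 0 else B x y)
            = B x y - (if y = x then B x y else 0) := by
          intro y; by_cases hyx : y = x <;> simp [hyx]
        rw [Finset.sum_congr rfl (fun y _ => e y), Finset.sum_sub_distrib,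
          Finset.sum_ite_eq' Finset.univ x (B x), if_pos (Finset.mem_univ x)]
      rw [h4, hBrow x, hμ x, if_neg hxv, hdiagB x hx, sub_zero] at h2
      exact h2
    have h5 : ∑ x ∈ ({c i0, p, q} : Finset (Fin n)), (∑ y : Fin n, B x y * (G.dist x y:ℝ))
        ≤ ∑ x : Fin n, ∑ y : Fin n, B x y * (G.dist x y:ℝ) := by
      apply Finset.sum_le_sum_of_subset_of_nonneg (Finset.subset_univ _)
      intro x _ _
      exact Finset.sum_nonneg (fun y _ => mul_nonneg (hB0 x y) (Nat.cast_nonneg _))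
    rw [Finset.sum_insert (by simp [hup, huq]), Finset.sum_insert (by simp [hpq]),
      Finset.sum_singleton] at h5
    have g1 := hrowge (c i0) (Ne.symm hvu) (Or.inl rfl)
    have g2 := hrowge p (Ne.symm hvp) (Or.inr (Or.inl rfl))
    have g3 := hrowge q (Ne.symm hvq) (Or.inr (Or.inr rfl))
    linarith
  have hmem : (3:ℝ) * α ∈ {r : ℝ | ∃ B : Fin n → Fin n → ℝ,
      IsCoupling (vertexMeasure G v) (vertexMeasure G (c i0)) B ∧
      r = ∑ x : Fin n, ∑ y : Fin n, B x y * (G.dist x y : ℝ)} :=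
    ⟨Acp, ⟨hAnn, hrow, hcol⟩, hcost.symm⟩
  have hW : wassersteinDist G (vertexMeasure G v) (vertexMeasure G (c i0)) = 3 * α := by
    rw [wassersteinDist]
    apply le_antisymm
    · exact csInf_le ⟨3*α, hlb⟩ hmem
    · exact le_csInf ⟨_, hmem⟩ hlb
  have hds : G.dist v (c i0) = 1 := SimpleGraph.dist_eq_one_iff_adj.mpr hadj
  rw [ricciCurv, hW, hds, Nat.cast_one, div_one, hα_def]
  exact aux_final n hn1
end

section
/- Let G be the graph obtained from K_n (n ≥ 6) by removing m edges (2 ≤ m ≤ n−3) incident to a single vertex u₀, and let v be a neighbor of u₀ (degree n−1). Then the 1-Wasserstein distance between the uniform neighbor measures satisfies W(m_v, m_{u₀}) ≤ (m+1)/(n−1), as witnessed by the coupling that keeps mass 1/(n−1) fixed at each common neighbor, moves mass 1/((m+1)(n−1)) from each of the m+1 vertices outside Γ(u₀) to v, and moves mass m/((m+1)(n−1)(n−m−1)) from each vertex outside Γ(u₀) to each neighbor of u₀. -/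
open Finset
open scoped Classical

theorem stmt15 (n m : ℕ) (hn : 6 ≤ n) (hm2 : 2 ≤ m) (hm3 : m ≤ n - 3)
    (u₀ : Fin n) (S : Finset (Fin n)) (hu₀S : u₀ ∉ S) (hScard : S.card = m)
    (G : SimpleGraph (Fin n))
    (hG : G = ⊤ \ SimpleGraph.fromEdgeSet {e | ∃ x ∈ S, e = s(u₀, x)})
    (v : Fin n) (hv : G.Adj v u₀) (hdeg : graphDeg G v = n - 1) :
    wassersteinDist G (vertexMeasure G v) (vertexMeasure G u₀) ≤
      ((m : ℝ) + 1) / ((n : ℝ) - 1) := by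
  classical
  have hAdj : ∀ a b : Fin n, G.Adj a b ↔ a ≠ b ∧ ¬(a = u₀ ∧ b ∈ S) ∧ ¬(b = u₀ ∧ a ∈ S) := by
    subst hG
    intro a b
    simp only [SimpleGraph.sdiff_adj, SimpleGraph.top_adj, SimpleGraph.fromEdgeSet_adj,
      Set.mem_setOf_eq, Sym2.eq_iff]
    constructor
    · rintro ⟨hab, h⟩
      refine ⟨hab, ?_, ?_⟩
      · rintro ⟨rfl, hb⟩; exact h ⟨⟨b, hb, Or.inl ⟨rfl, rfl⟩⟩, hab⟩
      · rintro ⟨rfl, ha⟩; exact h ⟨⟨a, ha, Or.inr ⟨rfl, rfl⟩⟩, hab⟩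
    · rintro ⟨hab, h1, h2⟩
      refine ⟨hab, ?_⟩
      rintro ⟨⟨x, hx, hxe⟩, -⟩
      rcases hxe with ⟨rfl, rfl⟩ | ⟨rfl, rfl⟩
      · exact h1 ⟨rfl, hx⟩
      · exact h2 ⟨rfl, hx⟩
  have hvu : v ≠ u₀ := hv.ne
  have hvS : v ∉ S := fun h => ((hAdj v u₀).mp hv).2.2 ⟨rfl, h⟩
  set T : Finset (Fin n) := insert u₀ S with hT
  have hvT : v ∉ T := by simp [hT, hvu, hvS]
  have hTcard : T.card = m + 1 := by rw [hT, Finset.card_insert_of_notMem hu₀S, hScard]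
  have hAdj0 : ∀ w, G.Adj u₀ w ↔ w ∉ T := by
    intro w
    rw [hAdj]
    rw [hT]
    constructor
    · rintro ⟨h1, h2, -⟩
      rw [Finset.mem_insert]
      push_neg
      exact ⟨fun e => h1 e.symm, fun hw => h2 ⟨rfl, hw⟩⟩
    · intro hw
      rw [Finset.mem_insert] at hw
      push_neg at hw
      exact ⟨fun e => hw.1 e.symm, fun hc => hw.2 hc.2, fun hc => hw.1 hc.1⟩
  have hAdjv : ∀ u, G.Adj v u ↔ u ≠ v := by
    intro u
    rw [hAdj]
    constructor
    · rintro ⟨h, -, -⟩; exact fun e => h e.symm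
    · intro h
      exact ⟨fun e => h e.symm, fun hc => hvu hc.1, fun hc => hvS hc.2⟩
  have hAdjT : ∀ u ∈ T, ∀ w, w ∉ T → G.Adj u w := by
    intro u hu w hw
    rw [hAdj]
    rw [hT, Finset.mem_insert] at hu
    simp only [hT, Finset.mem_insert, not_or] at hw
    obtain ⟨hw1, hw2⟩ := hw
    rcases hu with rfl | hu
    · exact ⟨fun e => hw1 e.symm, fun hc => hw2 hc.2, fun hc => hw1 hc.1⟩
    · refine ⟨?_, ?_, ?_⟩
      · rintro rfl; exact hw2 hu
      · rintro ⟨rfl, -⟩; exact hu₀S hu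
      · rintro ⟨rfl, -⟩; exact hw1 rfl
  have hneigh : G.neighborSet u₀ = ↑(Finset.univ \ T) := by
    ext w
    simp [SimpleGraph.mem_neighborSet, hAdj0 w]
  have hdeg0 : graphDeg G u₀ = n - (m + 1) := by
    rw [graphDeg, hneigh, Set.ncard_coe_finset, Finset.card_sdiff_of_subset (Finset.subset_univ T),
      Finset.card_univ, Fintype.card_fin, hTcard]
  have hm3' : m + 3 ≤ n := by omega
  have hNpos : (0:ℝ) < (n:ℝ) - 1 := by
    have : (6:ℝ) ≤ (n:ℝ) := by exact_mod_cast hn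
    linarith
  have hDpos : (0:ℝ) < (n:ℝ) - m - 1 := by
    have : (m:ℝ) + 3 ≤ (n:ℝ) := by exact_mod_cast hm3'
    linarith
  have hMpos : (0:ℝ) < (m:ℝ) + 1 := by positivity
  have hcastN : ((n - 1 : ℕ) : ℝ) = (n:ℝ) - 1 := by
    rw [Nat.cast_sub (by omega)]; norm_num
  have hcastD : ((n - (m + 1) : ℕ) : ℝ) = (n:ℝ) - m - 1 := by
    rw [Nat.cast_sub (by omega)]; push_cast; ring
  set B : Fin n → ℝ := fun w =>
    (if w = v then 1 / ((m:ℝ) + 1) else 0) +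
    (if w ∉ T then (m:ℝ) / (((m:ℝ) + 1) * ((n:ℝ) - m - 1)) else 0) with hB
  have hBnn : ∀ w, 0 ≤ B w := by
    intro w
    rw [hB]
    apply add_nonneg
    · split
      · exact le_of_lt (by positivity)
      · exact le_refl 0
    · split
      · exact div_nonneg (by positivity) (le_of_lt (by positivity))
      · exact le_refl 0
  have hsum_notT : ∀ c : ℝ, (∑ w : Fin n, if w ∉ T then c else 0) = ((n:ℝ) - m - 1) * c := by
    intro c
    rw [← Finset.sum_filter, Finset.filter_not, Finset.filter_univ_mem,
      Finset.sum_const, Finset.card_sdiff_of_subset (Finset.subset_univ T), Finset.card_univ,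
      Fintype.card_fin, hTcard, nsmul_eq_mul, hcastD]
  have hsum_inT : ∀ c : ℝ, (∑ u : Fin n, if u ∈ T then c else 0) = ((m:ℝ) + 1) * c := by
    intro c
    rw [← Finset.sum_filter, Finset.filter_univ_mem, Finset.sum_const, hTcard, nsmul_eq_mul]
    push_cast; ring
  have hBsum : ∑ w : Fin n, B w = 1 := by
    simp only [hB]
    rw [Finset.sum_add_distrib]
    rw [Finset.sum_ite_eq' Finset.univ v (fun _ => 1 / ((m:ℝ) + 1)), hsum_notT]
    simp only [Finset.mem_univ, if_true]
    field_simp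
    ring
  set A : Fin n → Fin n → ℝ := fun u w =>
    (if u ∉ T ∧ u ≠ v ∧ w = u then 1 / ((n:ℝ) - 1) else 0) +
    (if u ∈ T then (1 / ((n:ℝ) - 1)) * B w else 0) with hA
  have hAnn : ∀ u w, 0 ≤ A u w := by
    intro u w
    simp only [hA]
    apply add_nonneg
    · split
      · exact le_of_lt (by positivity)
      · exact le_refl 0
    · split
      · exact mul_nonneg (le_of_lt (by positivity)) (hBnn w)
      · exact le_refl 0
  have hrow : ∀ u, ∑ w, A u w = vertexMeasure G v u := by
    intro u
    have hμ : vertexMeasure G v u = if u ≠ v then 1 / ((n:ℝ) - 1) else 0 := by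
      simp only [vertexMeasure, hdeg, hcastN, hAdjv u]
    rw [hμ]
    simp only [hA]
    rw [Finset.sum_add_distrib]
    by_cases hu : u ∈ T
    · have h1 : (∑ w : Fin n, if u ∉ T ∧ u ≠ v ∧ w = u then 1/((n:ℝ)-1) else 0) = 0 := by
        apply Finset.sum_eq_zero; intro w _; simp [hu]
      have h2 : (∑ w : Fin n, if u ∈ T then (1/((n:ℝ)-1)) * B w else 0) = 1/((n:ℝ)-1) := by
        simp only [hu, if_true, ← Finset.mul_sum, hBsum, mul_one]
      have huv : u ≠ v := by rintro rfl; exact hvT hu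
      rw [h1, h2, zero_add, if_pos huv]
    · have h2 : (∑ w : Fin n, if u ∈ T then (1/((n:ℝ)-1)) * B w else 0) = 0 := by
        apply Finset.sum_eq_zero; intro w _; simp [hu]
      rw [h2, add_zero]
      by_cases huv : u = v
      · simp [huv]
      · simp only [hu, not_false_iff, huv, ne_eq, true_and, if_true]
        rw [Finset.sum_ite_eq' Finset.univ u (fun _ => 1/((n:ℝ)-1))]
        simp [huv]
  have hcol : ∀ w, ∑ u, A u w = vertexMeasure G u₀ w := by
    intro w
    have hν : vertexMeasure G u₀ w = if w ∉ T then 1 / ((n:ℝ) - m - 1) else 0 := by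
      simp only [vertexMeasure, hdeg0, hcastD, hAdj0 w]
    simp only [hA]
    rw [Finset.sum_add_distrib]
    have h1 : (∑ u : Fin n, if u ∉ T ∧ u ≠ v ∧ w = u then (1:ℝ)/((n:ℝ)-1) else 0)
        = if w ∉ T ∧ w ≠ v then 1/((n:ℝ)-1) else 0 := by
      rw [Finset.sum_eq_single_of_mem w (Finset.mem_univ w)]
      · by_cases h : w ∉ T ∧ w ≠ v
        · simp [h.1, h.2]
        · rw [if_neg h, if_neg]
          rintro ⟨hh1, hh2, -⟩
          exact h ⟨hh1, hh2⟩
      · intro u _ hne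
        exact if_neg (fun hc => hne hc.2.2.symm)
    rw [h1, hsum_inT, hν]
    simp only [hB]
    by_cases hwT : w ∈ T
    · have hwv : w ≠ v := by rintro rfl; exact hvT hwT
      rw [if_neg (fun hc => hc.1 hwT), if_neg hwv, if_neg (not_not_intro hwT),
        if_neg (not_not_intro hwT)]
      ring
    · by_cases hwv : w = v
      · rw [if_neg (fun hc => hc.2 hwv), if_pos hwv, if_pos hwT, if_pos hwT]
        field_simp
        ring
      · rw [if_pos ⟨hwT, hwv⟩, if_neg hwv, if_pos hwT, if_pos hwT]
        field_simp
        ring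
  rw [wassersteinDist]
  apply csInf_le
  · refine ⟨0, ?_⟩
    rintro c ⟨A', ⟨hA'nn, -, -⟩, rfl⟩
    apply Finset.sum_nonneg
    intro u _
    apply Finset.sum_nonneg
    intro w _
    exact mul_nonneg (hA'nn u w) (Nat.cast_nonneg _)
  · refine ⟨A, ⟨hAnn, hrow, hcol⟩, ?_⟩
    have hterm : ∀ u w : Fin n, A u w * (G.dist u w : ℝ)
        = if u ∈ T then (1/((n:ℝ)-1)) * (B w) else 0 := by
      intro u w
      by_cases hu : u ∈ T
      · have hne : ¬(u ∉ T ∧ u ≠ v ∧ w = u) := fun hc => hc.1 hu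
        simp only [hA]
        rw [if_neg hne, if_pos hu, zero_add]
        by_cases hw : w ∈ T
        · have hBw : B w = 0 := by
            have hwv : w ≠ v := by rintro rfl; exact hvT hw
            simp only [hB]
            rw [if_neg hwv, if_neg (not_not_intro hw)]
            ring
          rw [hBw]
          ring
        · have hd : G.dist u w = 1 := SimpleGraph.dist_eq_one_iff_adj.mpr (hAdjT u hu w hw)
          rw [hd]
          norm_num
      · simp only [hA]
        rw [if_neg hu, add_zero]
        by_cases h : u ∉ T ∧ u ≠ v ∧ w = u
        · obtain ⟨-, -, rfl⟩ := h
          rw [SimpleGraph.dist_self]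
          norm_num
        · rw [if_neg h]
          ring
    have hinner : ∀ u : Fin n, (∑ w : Fin n, A u w * (G.dist u w : ℝ))
        = if u ∈ T then 1/((n:ℝ)-1) else 0 := by
      intro u
      simp only [hterm]
      by_cases hu : u ∈ T
      · simp only [hu, if_true, ← Finset.mul_sum, hBsum, mul_one]
      · simp [hu]
    symm
    calc (∑ u : Fin n, ∑ w : Fin n, A u w * (G.dist u w : ℝ))
        = ∑ u : Fin n, (if u ∈ T then 1/((n:ℝ)-1) else 0) :=
          Finset.sum_congr rfl (fun u _ => hinner u)
      _ = ((m:ℝ)+1) * (1/((n:ℝ)-1)) := hsum_inT _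
      _ = ((m:ℝ)+1)/((n:ℝ)-1) := by ring
end

section
/- In the graph K_n − C_m (3 ≤ m ≤ n−1), every edge has nonnegative Ollivier–Ricci curvature provided n ≥ 6; more generally, for all three families of graphs K_n − {matching of m edges}, K_n − [m edges at one vertex], and K_n − C_m considered, the Ollivier–Ricci curvature of every edge (x,y) equals #(x,y)/(d_x ∨ d_y) and is therefore nonnegative. -/
/-!
For an edge `xy`, every coupling of `μ_x` and `μ_y` keeps at most
`∑ v, min (μ_x v) (μ_y v) = #(x,y) / (d_x ∨ d_y)` on the diagonal and moves the rest a distance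
at least one, so `W(μ_x, μ_y) ≥ 1 - #(x,y) / (d_x ∨ d_y)`. Equality, and with it the curvature
formula, holds as soon as the excess `(μ_x - μ_y)⁺` can be transported onto `(μ_y - μ_x)⁺` along
single edges. In the complement of a matching, a star or a cycle such a transport is obtained from
the product coupling, after rerouting the little mass it puts on removed edges through the edge
`yx`; when `x` and `y` both lie on the removed cycle, it is obtained instead from an automorphism
of the cycle exchanging them.
-/

open Finset
open scoped Classical

variable {V : Type*} {G : SimpleGraph V} {x y v : V}

lemma min_inv_inv_of_pos {a b : ℝ} (ha : 0 < a) (hb : 0 < b) : min a⁻¹ b⁻¹ = (max a b)⁻¹ := by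
  rcases le_total a b with h | h
  · rw [max_eq_right h, min_eq_right (inv_anti₀ ha h)]
  · rw [max_eq_left h, min_eq_left (inv_anti₀ hb h)]

lemma min_add_posPart_sub (a b : ℝ) : min a b + (a - b)⁺ = a := by
  rcases le_total a b with h | h
  · simp [h]
  · simp [h]

lemma mul_one_div_sub_le {k h N : ℝ} (h0 : 0 ≤ h) (hN : h < N) (hk : k * h ≤ N) :
    k * ((1 / (N - h) - 1 / N) * (1 / N)) ≤ 1 / (N - h) * (1 / N) := by
  have h1 : 0 < N - h := by linarith
  have h2 : 0 < N := by linarith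
  have e1 : k * ((1 / (N - h) - 1 / N) * (1 / N)) = k * h / ((N - h) * N * N) := by
    field_simp; ring
  have e2 : 1 / (N - h) * (1 / N) = N / ((N - h) * N * N) := by field_simp
  rw [e1, e2]
  exact div_le_div_of_nonneg_right hk (by positivity)

lemma vertexMeasure_of_adj (h : G.Adj x v) : vertexMeasure G x v = 1 / graphDeg G x :=
  if_pos h

lemma vertexMeasure_of_not_adj (h : ¬ G.Adj x v) : vertexMeasure G x v = 0 :=
  if_neg h

lemma adj_of_vertexMeasure_ne_zero (h : vertexMeasure G x v ≠ 0) : G.Adj x v :=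
  not_not.1 fun hn => h (vertexMeasure_of_not_adj hn)

lemma vertexMeasure_nonneg (G : SimpleGraph V) (x : V) : 0 ≤ vertexMeasure G x := by
  intro v; unfold vertexMeasure; split <;> positivity

lemma vertexMeasure_le (G : SimpleGraph V) (x v : V) :
    vertexMeasure G x v ≤ 1 / graphDeg G x := by
  unfold vertexMeasure; split
  · rfl
  · positivity

noncomputable def excess (G : SimpleGraph V) (x y : V) : V → ℝ :=
  (vertexMeasure G x - vertexMeasure G y)⁺

section Excess

variable {p : V}

lemma excess_nonneg (G : SimpleGraph V) (x y : V) : 0 ≤ excess G x y :=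
  fun _ => posPart_nonneg _

lemma excess_apply (G : SimpleGraph V) (x y p : V) :
    excess G x y p = max (vertexMeasure G x p - vertexMeasure G y p) 0 := rfl

lemma excess_le (G : SimpleGraph V) (x y p : V) : excess G x y p ≤ vertexMeasure G x p :=
  max_le (sub_le_self _ (vertexMeasure_nonneg G y p)) (vertexMeasure_nonneg G x p)

lemma excess_le_one_div (G : SimpleGraph V) (x y p : V) : excess G x y p ≤ 1 / graphDeg G x :=
  (excess_le G x y p).trans (vertexMeasure_le G x p)

lemma adj_of_excess_ne_zero (h : excess G x y p ≠ 0) : G.Adj x p :=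
  adj_of_vertexMeasure_ne_zero fun h0 =>
    h (le_antisymm (h0 ▸ excess_le G x y p) (excess_nonneg G x y p))

lemma excess_of_not_adj (hx : G.Adj x p) (hy : ¬ G.Adj y p) :
    excess G x y p = 1 / graphDeg G x := by
  rw [excess_apply, vertexMeasure_of_adj hx, vertexMeasure_of_not_adj hy, sub_zero,
    max_eq_left (by positivity)]

lemma excess_le_of_adj (hy : G.Adj y p) :
    excess G x y p ≤ max (1 / graphDeg G x - 1 / graphDeg G y : ℝ) 0 := by
  rw [excess_apply, vertexMeasure_of_adj hy]
  exact max_le_max (sub_le_sub_right (vertexMeasure_le G x p) _) le_rfl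

end Excess

noncomputable def offEdge (G : SimpleGraph V) (T : V → V → ℝ) (p q : V) : ℝ :=
  if G.Adj p q then 0 else T p q

lemma onEdge_add_offEdge (T : V → V → ℝ) (p q : V) :
    (if G.Adj p q then T p q else 0) + offEdge G T p q = T p q := by
  unfold offEdge; split_ifs <;> simp

lemma IsMatchingSet.eq_of_adj {M : Finset (Sym2 V)} (hM : IsMatchingSet M) {p q r : V}
    (hpq : (SimpleGraph.fromEdgeSet M).Adj p q) (hpr : (SimpleGraph.fromEdgeSet M).Adj p r) :
    q = r := by
  rw [SimpleGraph.fromEdgeSet_adj] at hpq hpr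
  have : s(p, q) = s(p, r) := by
    by_contra hne
    exact hM.2 hpq.1 hpr.1 hne p (Sym2.mem_mk_left p q) (Sym2.mem_mk_left p r)
  exact Sym2.congr_right.1 this

section Star

variable {u₀ : V} {S : Finset V}

def starGraph (u₀ : V) (S : Finset V) : SimpleGraph V :=
  SimpleGraph.fromEdgeSet {e | ∃ x ∈ S, e = s(u₀, x)}

lemma starGraph_adj (hu₀ : u₀ ∉ S) {p q : V} :
    (starGraph u₀ S).Adj p q ↔ p = u₀ ∧ q ∈ S ∨ q = u₀ ∧ p ∈ S := by
  simp only [starGraph, SimpleGraph.fromEdgeSet_adj, Set.mem_ofPred_eq, Sym2.eq_iff]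
  constructor
  · rintro ⟨⟨v, hv, ⟨rfl, rfl⟩ | ⟨rfl, rfl⟩⟩, -⟩
    exacts [Or.inl ⟨rfl, hv⟩, Or.inr ⟨rfl, hv⟩]
  · rintro (⟨rfl, hq⟩ | ⟨rfl, hp⟩)
    · exact ⟨⟨q, hq, Or.inl ⟨rfl, rfl⟩⟩, by rintro rfl; exact hu₀ hq⟩
    · exact ⟨⟨p, hp, Or.inr ⟨rfl, rfl⟩⟩, by rintro rfl; exact hu₀ hp⟩

lemma not_starGraph_adj_of_notMem (hu₀ : u₀ ∉ S) {y : V} (hyS : y ∉ S) (hy : y ≠ u₀) (v : V) :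
    ¬ (starGraph u₀ S).Adj y v := by
  rw [starGraph_adj hu₀]; tauto

end Star

section Cycle

variable {m : ℕ} {c : ZMod m → V}

def cycleThrough (c : ZMod m → V) : SimpleGraph V :=
  SimpleGraph.fromEdgeSet {e | ∃ i, e = s(c i, c (i + 1))}

lemma mem_range_of_cycleThrough_adj {u v : V} (h : (cycleThrough c).Adj u v) :
    u ∈ Set.range c := by
  simp only [cycleThrough, SimpleGraph.fromEdgeSet_adj, Set.mem_ofPred_eq, Sym2.eq_iff] at h
  obtain ⟨⟨i, ⟨rfl, -⟩ | ⟨rfl, -⟩⟩, -⟩ := h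
  exacts [⟨i, rfl⟩, ⟨i + 1, rfl⟩]

def PreservesCycleAdj (g : Equiv.Perm (ZMod m)) : Prop :=
  ∀ s t, (g t = g s + 1 ∨ g s = g t + 1) ↔ (t = s + 1 ∨ s = t + 1)

lemma preservesCycleAdj_addRight (k : ZMod m) : PreservesCycleAdj (Equiv.addRight k) := by
  intro s t
  simp [add_right_comm _ k 1]

lemma preservesCycleAdj_subLeft (k : ZMod m) : PreservesCycleAdj (Equiv.subLeft k) := by
  intro s t
  simp only [Equiv.subLeft_apply]
  constructor <;> rintro (h | h)
  exacts [Or.inr (by linear_combination h), Or.inl (by linear_combination h),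
    Or.inr (by linear_combination h), Or.inl (by linear_combination h)]

variable [Nontrivial (ZMod m)]

lemma cycleThrough_adj_apply (hc : Function.Injective c) {s t : ZMod m} :
    (cycleThrough c).Adj (c s) (c t) ↔ t = s + 1 ∨ s = t + 1 := by
  simp only [cycleThrough, SimpleGraph.fromEdgeSet_adj, Set.mem_ofPred_eq, Sym2.eq_iff,
    hc.eq_iff, hc.ne_iff]
  constructor
  · rintro ⟨⟨i, ⟨rfl, rfl⟩ | ⟨rfl, rfl⟩⟩, -⟩
    exacts [Or.inl rfl, Or.inr rfl]
  · rintro (rfl | rfl)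
    · exact ⟨⟨s, Or.inl ⟨rfl, rfl⟩⟩, by simp⟩
    · exact ⟨⟨t, Or.inr ⟨rfl, rfl⟩⟩, by simp⟩

lemma compl_cycleThrough_adj_apply (hc : Function.Injective c) {s t : ZMod m} :
    (cycleThrough c)ᶜ.Adj (c s) (c t) ↔ s ≠ t ∧ t ≠ s + 1 ∧ s ≠ t + 1 := by
  rw [SimpleGraph.compl_adj, cycleThrough_adj_apply hc, hc.ne_iff]
  tauto

lemma not_compl_cycleThrough_adj_apply_iff (hc : Function.Injective c) {s t : ZMod m} :
    ¬ (cycleThrough c)ᶜ.Adj (c s) (c t) ↔ s = t ∨ t = s + 1 ∨ s = t + 1 := by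
  rw [compl_cycleThrough_adj_apply hc]; tauto

lemma cycleThrough_adj_viaEmbedding_iff (hc : Function.Injective c) {g : Equiv.Perm (ZMod m)}
    (hg : PreservesCycleAdj g) (u v : V) :
    (cycleThrough c).Adj (g.viaEmbedding ⟨c, hc⟩ u) (g.viaEmbedding ⟨c, hc⟩ v) ↔
      (cycleThrough c).Adj u v := by
  by_cases hu : u ∈ Set.range c
  · by_cases hv : v ∈ Set.range c
    · obtain ⟨s, rfl⟩ := hu
      obtain ⟨t, rfl⟩ := hv
      have h := Equiv.Perm.viaEmbedding_apply g ⟨c, hc⟩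
      simp only [Function.Embedding.coeFn_mk] at h
      rw [h, h, cycleThrough_adj_apply hc, cycleThrough_adj_apply hc, hg]
    · rw [Equiv.Perm.viaEmbedding_apply_of_notMem _ _ v hv]
      exact iff_of_false (fun h => hv (mem_range_of_cycleThrough_adj h.symm))
        (fun h => hv (mem_range_of_cycleThrough_adj h.symm))
  · rw [Equiv.Perm.viaEmbedding_apply_of_notMem _ _ u hu]
    exact iff_of_false (fun h => hu (mem_range_of_cycleThrough_adj h))
      (fun h => hu (mem_range_of_cycleThrough_adj h))

/-- `g` acting on the vertices of the cycle, fixing all other vertices. -/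
noncomputable def complCycleThroughAut (hc : Function.Injective c) (g : Equiv.Perm (ZMod m))
    (hg : PreservesCycleAdj g) :
    (cycleThrough c)ᶜ ≃g (cycleThrough c)ᶜ where
  toEquiv := g.viaEmbedding ⟨c, hc⟩
  map_rel_iff' {u v} := by
    simp [SimpleGraph.compl_adj, cycleThrough_adj_viaEmbedding_iff hc hg]

lemma complCycleThroughAut_apply (hc : Function.Injective c) {g : Equiv.Perm (ZMod m)}
    (hg : PreservesCycleAdj g) (t : ZMod m) :
    complCycleThroughAut hc g hg (c t) = c (g t) :=
  Equiv.Perm.viaEmbedding_apply g ⟨c, hc⟩ t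

end Cycle

variable [Fintype V]

lemma graphDeg_eq_degree (G : SimpleGraph V) (x : V) : graphDeg G x = G.degree x := by
  rw [graphDeg, Set.ncard_eq_toFinset_card', ← SimpleGraph.card_neighborFinset_eq_degree]
  rfl

lemma graphDeg_eq_card (G : SimpleGraph V) (x : V) : graphDeg G x = #{v | G.Adj x v} := by
  rw [graphDeg_eq_degree, ← SimpleGraph.card_neighborFinset_eq_degree,
    SimpleGraph.neighborFinset_eq_filter]

lemma triCount_eq_card (G : SimpleGraph V) (x y : V) :
    triCount G x y = #{v | G.Adj x v ∧ G.Adj y v} := by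
  rw [triCount, ← Set.ncard_coe_finset]
  congr 1; ext v; simp [SimpleGraph.neighborSet]

lemma graphDeg_pos (h : G.Adj x y) : 0 < graphDeg G x := by
  rw [graphDeg_eq_card]
  exact Finset.card_pos.2 ⟨y, by simpa using h⟩

lemma graphDeg_compl (H : SimpleGraph V) (v : V) :
    graphDeg Hᶜ v = Fintype.card V - 1 - H.degree v := by
  rw [graphDeg_eq_degree]
  convert SimpleGraph.degree_compl (G := H) (v := v)

lemma sum_vertexMeasure (h : G.Adj x y) : ∑ v, vertexMeasure G x v = 1 := by
  have hd : (graphDeg G x : ℝ) ≠ 0 := by exact_mod_cast (graphDeg_pos h).ne'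
  simp only [vertexMeasure, Finset.sum_ite, Finset.sum_const, ← graphDeg_eq_card, nsmul_eq_mul]
  field_simp
  simp

lemma sum_min_vertexMeasure (hxy : G.Adj x y) :
    ∑ v, min (vertexMeasure G x v) (vertexMeasure G y v) =
      triCount G x y / (max (graphDeg G x) (graphDeg G y) : ℝ) := by
  have hx : (0 : ℝ) < graphDeg G x := by exact_mod_cast graphDeg_pos hxy
  have hy : (0 : ℝ) < graphDeg G y := by exact_mod_cast graphDeg_pos hxy.symm
  have hmin : ∀ v, min (vertexMeasure G x v) (vertexMeasure G y v) =
      if G.Adj x v ∧ G.Adj y v then 1 / (max (graphDeg G x) (graphDeg G y) : ℝ) else 0 := by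
    intro v
    unfold vertexMeasure
    by_cases hxv : G.Adj x v <;> by_cases hyv : G.Adj y v <;>
      simp [hxv, hyv, min_inv_inv_of_pos hx hy, hx.le, hy.le]
  simp only [hmin, Finset.sum_ite, Finset.sum_const, nsmul_eq_mul, triCount_eq_card]
  simp [div_eq_mul_inv]

section Excess

variable {p : V}

lemma excess_eq_zero_of_adj (hdeg : graphDeg G y ≤ graphDeg G x) (hy : G.Adj y p) :
    excess G x y p = 0 := by
  have hy0 : (0 : ℝ) < graphDeg G y := by exact_mod_cast graphDeg_pos hy
  rw [excess_apply, vertexMeasure_of_adj hy, max_eq_right]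
  exact sub_nonpos.2 ((vertexMeasure_le G x p).trans
    (one_div_le_one_div_of_le hy0 (by exact_mod_cast hdeg)))

lemma not_adj_of_excess_ne_zero (hdeg : graphDeg G y ≤ graphDeg G x) (h : excess G x y p ≠ 0) :
    ¬ G.Adj y p :=
  fun hy => h (excess_eq_zero_of_adj hdeg hy)

end Excess

lemma sum_excess_comm (hxy : G.Adj x y) : ∑ v, excess G x y v = ∑ v, excess G y x v := by
  have h : ∀ x y : V, G.Adj x y →
      ∑ v, excess G x y v = 1 - ∑ v, min (vertexMeasure G x v) (vertexMeasure G y v) := by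
    intro x y hxy
    rw [← sum_vertexMeasure hxy, eq_sub_iff_add_eq, ← Finset.sum_add_distrib]
    exact Finset.sum_congr rfl fun v _ => by
      rw [add_comm, excess_apply, ← posPart_def]; exact min_add_posPart_sub _ _
  rw [h x y hxy, h y x hxy.symm]
  simp_rw [min_comm]

section Automorphism

variable (σ : G ≃g G)

lemma graphDeg_apply_iso (x : V) : graphDeg G (σ x) = graphDeg G x := by
  simp [graphDeg_eq_degree]

lemma vertexMeasure_apply_iso (x v : V) :
    vertexMeasure G (σ x) (σ v) = vertexMeasure G x v := by
  simp [vertexMeasure, graphDeg_apply_iso, σ.map_adj_iff]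

lemma excess_comp_symm_of_iso (hσx : σ x = y) (hσy : σ y = x) :
    excess G x y ∘ σ.toEquiv.symm = excess G y x := by
  funext q
  obtain ⟨p, rfl⟩ := σ.surjective q
  have hy : vertexMeasure G y (σ p) = vertexMeasure G x p := by rw [← hσx, vertexMeasure_apply_iso]
  have hx : vertexMeasure G x (σ p) = vertexMeasure G y p := by rw [← hσy, vertexMeasure_apply_iso]
  show excess G x y (σ.toEquiv.symm (σ.toEquiv p)) = excess G y x (σ p)
  rw [Equiv.symm_apply_apply, excess_apply, excess_apply, hx, hy]

end Automorphism

section Coupling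

variable {μ ν : V → ℝ} {A : V → V → ℝ}

lemma IsCoupling.apply_le_left (hA : IsCoupling μ ν A) (u v : V) : A u v ≤ μ u :=
  hA.2.1 u ▸ Finset.single_le_sum (fun w _ => hA.1 u w) (mem_univ v)

lemma IsCoupling.apply_le_right (hA : IsCoupling μ ν A) (u v : V) : A u v ≤ ν v :=
  hA.2.2 v ▸ Finset.single_le_sum (fun w _ => hA.1 w v) (mem_univ u)

lemma IsCoupling.apply_eq_zero_of_left (hA : IsCoupling μ ν A) {u : V} (hu : μ u = 0) (v : V) :
    A u v = 0 :=
  le_antisymm (hu ▸ hA.apply_le_left u v) (hA.1 u v)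

lemma IsCoupling.apply_eq_zero_of_right (hA : IsCoupling μ ν A) {v : V} (hv : ν v = 0) (u : V) :
    A u v = 0 :=
  le_antisymm (hv ▸ hA.apply_le_right u v) (hA.1 u v)

lemma IsCoupling.transpose (hA : IsCoupling μ ν A) : IsCoupling ν μ (fun u v => A v u) :=
  ⟨fun u v => hA.1 v u, hA.2.2, hA.2.1⟩

lemma one_sub_sum_min_le_cost (hA : IsCoupling μ ν A) (hμ : ∑ v, μ v = 1)
    (hreach : ∀ u v, A u v ≠ 0 → G.Reachable u v) :
    1 - ∑ v, min (μ v) (ν v) ≤ ∑ u, ∑ v, A u v * G.dist u v := by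
  have hterm : ∀ u v, A u v - (if u = v then A u v else 0) ≤ A u v * G.dist u v := by
    intro u v
    by_cases huv : u = v
    · subst huv; simp
    by_cases hA0 : A u v = 0
    · simp [hA0]
    have hdist : (1 : ℝ) ≤ G.dist u v := by
      exact_mod_cast ((hreach u v hA0).pos_dist_of_ne huv)
    simpa [huv] using le_mul_of_one_le_right (hA.1 u v) hdist
  calc 1 - ∑ v, min (μ v) (ν v) ≤ 1 - ∑ u, A u u := by
        gcongr with u
        exact le_min (hA.apply_le_left u u) (hA.apply_le_right u u)
    _ = ∑ u, ∑ v, (A u v - if u = v then A u v else 0) := by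
        simp [Finset.sum_sub_distrib, hA.2.1, hμ]
    _ ≤ ∑ u, ∑ v, A u v * G.dist u v := by gcongr with u _ v; exact hterm u v

end Coupling

def AdjCouplable (G : SimpleGraph V) (a b : V → ℝ) : Prop :=
  ∃ T : V → V → ℝ, IsCoupling a b T ∧ ∀ u v, T u v ≠ 0 → G.Adj u v

lemma AdjCouplable.symm {a b : V → ℝ} (h : AdjCouplable G a b) : AdjCouplable G b a := by
  obtain ⟨T, hT, hTadj⟩ := h
  exact ⟨fun u v => T v u, hT.transpose, fun u v h => (hTadj v u h).symm⟩

theorem wassersteinDist_eq_of_adjCouplable {μ ν : V → ℝ} (hμ : 0 ≤ μ) (hν : 0 ≤ ν)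
    (hμ1 : ∑ v, μ v = 1) (hreach : ∀ u v, μ u ≠ 0 → ν v ≠ 0 → G.Reachable u v)
    (h : AdjCouplable G (μ - ν)⁺ (ν - μ)⁺) :
    wassersteinDist G μ ν = 1 - ∑ v, min (μ v) (ν v) := by
  obtain ⟨T, hT, hTadj⟩ := h
  set A : V → V → ℝ := fun u v => (if u = v then min (μ u) (ν u) else 0) + T u v
  have hA : IsCoupling μ ν A := by
    refine ⟨fun u v => add_nonneg ?_ (hT.1 u v), fun u => ?_, fun v => ?_⟩
    · split_ifs
      exacts [le_min (hμ u) (hν u), le_rfl]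
    · simp [A, Finset.sum_add_distrib, hT.2.1, min_add_posPart_sub]
    · simp [A, Finset.sum_add_distrib, hT.2.2, min_comm (μ v), min_add_posPart_sub]
  have hcost : ∑ u, ∑ v, A u v * G.dist u v = 1 - ∑ v, min (μ v) (ν v) := by
    have hterm : ∀ u v, A u v * G.dist u v = T u v := by
      intro u v
      by_cases hT0 : T u v = 0
      · rcases eq_or_ne u v with rfl | huv
        · simp [A, hT0]
        · simp [A, hT0, huv]
      have hadj := hTadj u v hT0
      simp [A, hadj.ne, SimpleGraph.dist_eq_one_iff_adj.2 hadj]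
    simp_rw [hterm, hT.2.1, ← hμ1, ← Finset.sum_sub_distrib]
    congr 1; ext v
    rw [Pi.posPart_apply, Pi.sub_apply]
    linarith [min_add_posPart_sub (μ v) (ν v)]
  refine IsLeast.csInf_eq ⟨⟨A, hA, hcost.symm⟩, ?_⟩
  rintro _ ⟨A', hA', rfl⟩
  refine one_sub_sum_min_le_cost hA' hμ1 fun u v h => hreach u v ?_ ?_
  · exact fun h0 => h (hA'.apply_eq_zero_of_left h0 v)
  · exact fun h0 => h (hA'.apply_eq_zero_of_right h0 u)

theorem ricciCurv_eq_of_adjCouplable (hxy : G.Adj x y)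
    (h : AdjCouplable G (excess G x y) (excess G y x)) :
    ricciCurv G x y = triCount G x y / (max (graphDeg G x) (graphDeg G y) : ℝ) := by
  have hreach : ∀ u v, vertexMeasure G x u ≠ 0 → vertexMeasure G y v ≠ 0 → G.Reachable u v :=
    fun u v hu hv => ((adj_of_vertexMeasure_ne_zero hu).symm.reachable.trans hxy.reachable).trans
      (adj_of_vertexMeasure_ne_zero hv).reachable
  rw [ricciCurv, wassersteinDist_eq_of_adjCouplable (vertexMeasure_nonneg G x)
    (vertexMeasure_nonneg G y) (sum_vertexMeasure hxy) hreach h, sum_min_vertexMeasure hxy,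
    SimpleGraph.dist_eq_one_iff_adj.2 hxy]
  simp

section Reroute

variable (G) (T₀ : V → V → ℝ) (x y : V)


/-- `T₀` with its off-edge mass rerouted: what leaves `p` along a non-edge is sent to `x` instead,
what enters `q` along a non-edge is supplied by `y` instead, and the entry `(y, x)` pays for both.
When all mass sits on neighbours of `x` and `y`, every move is then along an edge. -/
noncomputable def reroute (p q : V) : ℝ :=
  (if G.Adj p q then T₀ p q else 0) + (if q = x then ∑ q', offEdge G T₀ p q' else 0) +
    (if p = y then ∑ p', offEdge G T₀ p' q else 0) -
    (if p = y ∧ q = x then ∑ p', ∑ q', offEdge G T₀ p' q' else 0)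

variable {G T₀ x y}

lemma sum_reroute_left (p : V) : ∑ q, reroute G T₀ x y p q = ∑ q, T₀ p q := by
  have hin : ∑ q, (if p = y then ∑ p', offEdge G T₀ p' q else 0) =
      if p = y then ∑ p', ∑ q', offEdge G T₀ p' q' else 0 := by
    split_ifs
    exacts [Finset.sum_comm, by simp]
  have hyx : ∑ q, (if p = y ∧ q = x then ∑ p', ∑ q', offEdge G T₀ p' q' else 0) =
      if p = y then ∑ p', ∑ q', offEdge G T₀ p' q' else 0 := by
    split_ifs with hp <;> simp [hp]
  simp only [reroute, Finset.sum_add_distrib, Finset.sum_sub_distrib, Finset.sum_ite_eq',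
    Finset.mem_univ, if_true, hin, hyx, add_sub_cancel_right]
  rw [← Finset.sum_add_distrib]
  exact Finset.sum_congr rfl fun q _ => onEdge_add_offEdge T₀ p q

lemma sum_reroute_right (q : V) : ∑ p, reroute G T₀ x y p q = ∑ p, T₀ p q := by
  have hout : ∑ p, (if q = x then ∑ q', offEdge G T₀ p q' else 0) =
      if q = x then ∑ p', ∑ q', offEdge G T₀ p' q' else 0 := by
    split_ifs <;> simp
  have hyx : ∑ p, (if p = y ∧ q = x then ∑ p', ∑ q', offEdge G T₀ p' q' else 0) =
      if q = x then ∑ p', ∑ q', offEdge G T₀ p' q' else 0 := by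
    split_ifs with hq <;> simp [hq]
  simp only [reroute, Finset.sum_add_distrib, Finset.sum_sub_distrib, Finset.sum_ite_eq',
    Finset.mem_univ, if_true, hout, hyx]
  rw [add_right_comm, add_sub_cancel_right, ← Finset.sum_add_distrib]
  exact Finset.sum_congr rfl fun p _ => onEdge_add_offEdge T₀ p q

lemma reroute_nonneg (hT₀ : ∀ p q, 0 ≤ T₀ p q) (hxy : G.Adj x y)
    (hbad : ∑ p, ∑ q, offEdge G T₀ p q ≤ T₀ y x) (p q : V) : 0 ≤ reroute G T₀ x y p q := by
  have hoff : ∀ p q, 0 ≤ offEdge G T₀ p q := fun p q => by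
    unfold offEdge; split_ifs; exacts [le_rfl, hT₀ p q]
  have h1 : 0 ≤ if G.Adj p q then T₀ p q else 0 := by split_ifs; exacts [hT₀ p q, le_rfl]
  have h2 : 0 ≤ if q = x then ∑ q', offEdge G T₀ p q' else 0 := by
    split_ifs; exacts [Finset.sum_nonneg fun _ _ => hoff _ _, le_rfl]
  have h3 : 0 ≤ if p = y then ∑ p', offEdge G T₀ p' q else 0 := by
    split_ifs; exacts [Finset.sum_nonneg fun _ _ => hoff _ _, le_rfl]
  unfold reroute
  by_cases hpq : p = y ∧ q = x
  · obtain ⟨rfl, rfl⟩ := hpq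
    simp only [if_pos hxy.symm, if_true, and_self] at h1 h2 h3 ⊢
    linarith
  · rw [if_neg hpq]
    linarith

lemma adj_of_reroute_ne_zero (hxy : G.Adj x y) (hx : ∀ p q, T₀ p q ≠ 0 → G.Adj x p)
    (hy : ∀ p q, T₀ p q ≠ 0 → G.Adj y q) {p q : V} (h : reroute G T₀ x y p q ≠ 0) :
    G.Adj p q := by
  by_contra hpq
  have hout : q = x → ∑ q', offEdge G T₀ p q' = 0 := by
    rintro rfl
    exact Finset.sum_eq_zero fun q' _ => by
      unfold offEdge; split_ifs
      · rfl
      · exact not_not.1 fun h => hpq (hx p q' h).symm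
  have hin : p = y → ∑ p', offEdge G T₀ p' q = 0 := by
    rintro rfl
    exact Finset.sum_eq_zero fun p' _ => by
      unfold offEdge; split_ifs
      · rfl
      · exact not_not.1 fun h => hpq (hy p' q h)
  have hyx : ¬ (p = y ∧ q = x) := by
    rintro ⟨rfl, rfl⟩; exact hpq hxy.symm
  apply h
  unfold reroute
  by_cases hqx : q = x <;> by_cases hpy : p = y <;> simp_all

end Reroute

section Constructions

variable {a b : V → ℝ}

lemma isCoupling_mul_div_sum (ha : 0 ≤ a) (hb : 0 ≤ b) (hab : ∑ v, a v = ∑ v, b v) :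
    IsCoupling a b (fun p q => a p * b q / ∑ v, a v) := by
  by_cases hS : ∑ v, a v = 0
  · have ha0 : a = 0 := funext fun v =>
      (Finset.sum_eq_zero_iff_of_nonneg fun w _ => ha w).1 hS v (mem_univ v)
    have hb0 : b = 0 := funext fun v =>
      (Finset.sum_eq_zero_iff_of_nonneg fun w _ => hb w).1 (hab ▸ hS) v (mem_univ v)
    subst ha0 hb0
    exact ⟨fun _ _ => by simp, fun _ => by simp, fun _ => by simp⟩
  refine ⟨fun p q => div_nonneg (mul_nonneg (ha p) (hb q)) (Finset.sum_nonneg fun v _ => ha v),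
    fun p => ?_, fun q => ?_⟩
  · rw [← Finset.sum_div, ← Finset.mul_sum, ← hab, mul_div_assoc, div_self hS, mul_one]
  · rw [← Finset.sum_div, ← Finset.sum_mul, mul_div_right_comm, div_self hS, one_mul]

lemma isCoupling_perm_s13 (ha : 0 ≤ a) (σ : Equiv.Perm V) :
    IsCoupling a (a ∘ σ.symm) (fun p q => if σ p = q then a p else 0) := by
  refine ⟨fun p q => ?_, fun p => by simp, fun q => ?_⟩
  · dsimp only; split_ifs; exacts [ha p, le_rfl]
  · simp [← Equiv.eq_symm_apply]

lemma adjCouplable_of_forall_adj (ha : 0 ≤ a) (hb : 0 ≤ b) (hab : ∑ v, a v = ∑ v, b v)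
    (h : ∀ p q, a p ≠ 0 → b q ≠ 0 → G.Adj p q) : AdjCouplable G a b := by
  refine ⟨_, isCoupling_mul_div_sum ha hb hab, fun p q hpq => h p q ?_ ?_⟩
  · rintro hp; simp [hp] at hpq
  · rintro hq; simp [hq] at hpq

theorem adjCouplable_of_reroute {T₀ : V → V → ℝ} (hT₀ : IsCoupling a b T₀) (hxy : G.Adj x y)
    (ha : ∀ p, a p ≠ 0 → G.Adj x p) (hb : ∀ q, b q ≠ 0 → G.Adj y q)
    (hbad : ∑ p, ∑ q, offEdge G T₀ p q ≤ T₀ y x) : AdjCouplable G a b := by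
  refine ⟨reroute G T₀ x y, ⟨reroute_nonneg hT₀.1 hxy hbad, fun p => ?_, fun q => ?_⟩,
    fun u v => adj_of_reroute_ne_zero hxy
      (fun p q h => ha p fun hp => h (hT₀.apply_eq_zero_of_left hp q))
      (fun p q h => hb q fun hq => h (hT₀.apply_eq_zero_of_right hq p))⟩
  · rw [sum_reroute_left, hT₀.2.1]
  · rw [sum_reroute_right, hT₀.2.2]

lemma adjCouplable_of_sum_mul_le {a b : V → ℝ} (ha : 0 ≤ a) (hb : 0 ≤ b)
    (hab : ∑ v, a v = ∑ v, b v) (hxy : G.Adj x y) (hax : ∀ p, a p ≠ 0 → G.Adj x p)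
    (hby : ∀ q, b q ≠ 0 → G.Adj y q)
    (hbad : ∑ p, ∑ q, (if G.Adj p q then 0 else a p * b q) ≤ a y * b x) :
    AdjCouplable G a b := by
  refine adjCouplable_of_reroute (isCoupling_mul_div_sum ha hb hab) hxy hax hby ?_
  have hS : 0 ≤ ∑ v, a v := Finset.sum_nonneg fun v _ => ha v
  have hdiv : ∑ p, ∑ q, (if G.Adj p q then 0 else a p * b q / ∑ v, a v) =
      (∑ p, ∑ q, if G.Adj p q then 0 else a p * b q) / ∑ v, a v := by
    simp only [Finset.sum_div, ite_div, zero_div]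
  simp only [offEdge]
  rw [hdiv]
  exact div_le_div_of_nonneg_right hbad hS

end Constructions

lemma adjCouplable_excess_of_forall_adj (hxy : G.Adj x y)
    (h : ∀ p q, excess G x y p ≠ 0 → excess G y x q ≠ 0 → G.Adj p q) :
    AdjCouplable G (excess G x y) (excess G y x) :=
  adjCouplable_of_forall_adj (excess_nonneg G x y) (excess_nonneg G y x) (sum_excess_comm hxy) h

/-- The excess of `μ_x` then sits on `y` alone. -/
lemma adjCouplable_excess_of_neighbor_subset (hxy : G.Adj x y)
    (hdeg : graphDeg G y ≤ graphDeg G x) (h : ∀ p, G.Adj x p → p ≠ y → G.Adj y p) :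
    AdjCouplable G (excess G x y) (excess G y x) := by
  refine adjCouplable_excess_of_forall_adj hxy fun p q hp hq => ?_
  obtain rfl : p = y := not_not.1 fun hpy =>
    not_adj_of_excess_ne_zero hdeg hp (h p (adj_of_excess_ne_zero hp) hpy)
  exact adj_of_excess_ne_zero hq

lemma adjCouplable_excess_of_graphDeg_le
    (h : ∀ x y, G.Adj x y → graphDeg G y ≤ graphDeg G x →
      AdjCouplable G (excess G x y) (excess G y x))
    (hxy : G.Adj x y) : AdjCouplable G (excess G x y) (excess G y x) :=
  (le_total (graphDeg G y) (graphDeg G x)).elim (h x y hxy) fun hle => (h y x hxy.symm hle).symm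

lemma sum_le_of_subsingleton {f : V → ℝ} {K : ℝ} (hK : 0 ≤ K) (hf : ∀ p, f p ≤ K)
    (hs : {p | f p ≠ 0}.Subsingleton) : ∑ p, f p ≤ K := by
  by_cases h : ∃ p, f p ≠ 0
  · obtain ⟨p, hp⟩ := h
    rw [Finset.sum_eq_single p (fun q _ hqp => not_not.1 fun hq => hqp (hs hq hp))
      (fun h => (h (mem_univ p)).elim)]
    exact hf p
  · simp only [ne_eq, not_exists, not_not] at h
    simp [h, hK]

/-- `σ` carries the excess of `μ_x` onto that of `μ_y`, and a single move `p ↦ σ p` that is not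
along an edge can still be rerouted. -/
theorem adjCouplable_excess_of_iso (σ : G ≃g G) (hxy : G.Adj x y) (hσx : σ x = y) (hσy : σ y = x)
    (hbad : {p | excess G x y p ≠ 0 ∧ ¬ G.Adj p (σ p)}.Subsingleton) :
    AdjCouplable G (excess G x y) (excess G y x) := by
  have hT₀ := isCoupling_perm_s13 (excess_nonneg G x y) σ.toEquiv
  rw [excess_comp_symm_of_iso σ hσx hσy] at hT₀
  refine adjCouplable_of_reroute hT₀ hxy (fun p => adj_of_excess_ne_zero)
    (fun q => adj_of_excess_ne_zero) ?_
  have hrow : ∀ p, ∑ q, (if G.Adj p q then 0 else if σ p = q then excess G x y p else 0) =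
      if G.Adj p (σ p) then 0 else excess G x y p := by
    intro p
    rw [Finset.sum_eq_single (σ p) (fun q _ hq => by simp [Ne.symm hq]) (by simp)]
    simp
  simp only [RelIso.coe_fn_toEquiv, offEdge, hrow, hσy, if_true]
  refine sum_le_of_subsingleton (excess_nonneg G x y y) (fun p => ?_) (hbad.anti fun p hp => ?_)
  · rw [excess_of_not_adj hxy G.irrefl]
    split_ifs
    exacts [by positivity, excess_le_one_div G x y p]
  · by_cases h : G.Adj p (σ p) <;> simp_all

section Complement

variable {H : SimpleGraph V}

lemma graphDeg_compl_le_of_isolated (hy : ∀ v, ¬ H.Adj y v) : graphDeg Hᶜ x ≤ graphDeg Hᶜ y := by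
  rw [graphDeg_compl, graphDeg_compl, (SimpleGraph.degree_eq_zero _ _).2 hy]
  omega

lemma compl_path_of_excess_mul_ne_zero (hy : ∀ v, ¬ H.Adj y v) {p q : V} (hpq : ¬ Hᶜ.Adj p q)
    (h0 : excess Hᶜ x y p * excess Hᶜ y x q ≠ 0) :
    H.Adj x q ∧ H.Adj q p ∧ Hᶜ.Adj x p ∧ Hᶜ.Adj y p := by
  have hxp : Hᶜ.Adj x p := adj_of_excess_ne_zero (left_ne_zero_of_mul h0)
  have hxq : ¬ Hᶜ.Adj x q :=
    not_adj_of_excess_ne_zero (graphDeg_compl_le_of_isolated hy) (right_ne_zero_of_mul h0)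
  refine ⟨?_, ?_, hxp, ?_⟩ <;> simp only [SimpleGraph.compl_adj, not_and, not_not] at * <;>
    grind [SimpleGraph.adj_symm]

/-- Here the product coupling puts mass only on the non-edges `(p, q)` where `x - q - p` is a path
of `H`, each at most `(1 / d_x - 1 / d_y) / d_y`, while the entry `(y, x)` has `1 / (d_x d_y)`. -/
theorem adjCouplable_excess_compl_of_isolated (hxy : Hᶜ.Adj x y) (hy : ∀ v, ¬ H.Adj y v)
    (s : Finset (V × V)) (hs : ∀ p q, H.Adj x q → H.Adj q p → Hᶜ.Adj x p → (p, q) ∈ s)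
    (hcard : #s * H.degree x ≤ Fintype.card V - 1) :
    AdjCouplable Hᶜ (excess Hᶜ x y) (excess Hᶜ y x) := by
  set N := Fintype.card V - 1
  have hdy : graphDeg Hᶜ y = N := by
    rw [graphDeg_compl, (SimpleGraph.degree_eq_zero _ _).2 hy, Nat.sub_zero]
  have hlt : H.degree x < N := by have := graphDeg_pos hxy; rw [graphDeg_compl] at this; omega
  have hdx : (graphDeg Hᶜ x : ℝ) = N - H.degree x := by
    rw [graphDeg_compl, Nat.cast_sub hlt.le]
  have hsub : (0 : ℝ) ≤ 1 / graphDeg Hᶜ x - 1 / graphDeg Hᶜ y :=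
    sub_nonneg.2 (one_div_le_one_div_of_le (by exact_mod_cast graphDeg_pos hxy)
      (by exact_mod_cast graphDeg_compl_le_of_isolated hy))
  set K : ℝ := (1 / graphDeg Hᶜ x - 1 / graphDeg Hᶜ y) * (1 / graphDeg Hᶜ y) with hK_def
  have hterm : ∀ p q, (if Hᶜ.Adj p q then 0 else excess Hᶜ x y p * excess Hᶜ y x q) ≤
      if (p, q) ∈ s then K else 0 := by
    intro p q
    have hK : 0 ≤ if (p, q) ∈ s then K else 0 := by
      split_ifs; exacts [mul_nonneg hsub (by positivity), le_rfl]
    by_cases hpq : Hᶜ.Adj p q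
    · rwa [if_pos hpq]
    rw [if_neg hpq]
    by_cases h0 : excess Hᶜ x y p * excess Hᶜ y x q = 0
    · rwa [h0]
    obtain ⟨hxq, hqp, hxp, hyp⟩ := compl_path_of_excess_mul_ne_zero hy hpq h0
    rw [if_pos (hs p q hxq hqp hxp)]
    refine mul_le_mul ?_ (excess_le_one_div _ y x q) (excess_nonneg _ y x q) hsub
    exact (excess_le_of_adj hyp).trans (max_eq_left hsub).le
  refine adjCouplable_of_sum_mul_le (excess_nonneg _ x y) (excess_nonneg _ y x)
    (sum_excess_comm hxy) hxy (fun p => adj_of_excess_ne_zero) (fun q => adj_of_excess_ne_zero) ?_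
  calc _ ≤ ∑ p, ∑ q, if (p, q) ∈ s then K else 0 :=
        Finset.sum_le_sum fun p _ => Finset.sum_le_sum fun q _ =>
          le_of_eq_of_le (by congr) (hterm p q)
    _ = #s * K := by
      rw [← Finset.sum_product' (f := fun p q => if (p, q) ∈ s then K else 0),
        Finset.univ_product_univ, Finset.sum_ite_mem, Finset.univ_inter, Finset.sum_const,
        nsmul_eq_mul]
    _ ≤ excess Hᶜ x y y * excess Hᶜ y x x := by
      rw [excess_of_not_adj hxy Hᶜ.irrefl, excess_of_not_adj hxy.symm Hᶜ.irrefl, hK_def, hdx,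
        hdy]
      exact mul_one_div_sub_le (k := #s) (h := H.degree x) (N := N) (Nat.cast_nonneg _)
        (by exact_mod_cast hlt) (by exact_mod_cast hcard)

theorem adjCouplable_excess_compl_of_matching (hH : ∀ p q r, H.Adj p q → H.Adj p r → q = r)
    (hxy : Hᶜ.Adj x y) : AdjCouplable Hᶜ (excess Hᶜ x y) (excess Hᶜ y x) := by
  refine adjCouplable_excess_of_graphDeg_le (fun x y hxy hdeg => ?_) hxy
  refine adjCouplable_excess_of_forall_adj hxy fun p q hp hq => ?_
  have hyp := not_adj_of_excess_ne_zero hdeg hp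
  have hyq := adj_of_excess_ne_zero hq
  rw [SimpleGraph.compl_adj] at hyp hyq ⊢
  refine ⟨by rintro rfl; exact hyp hyq, fun hpq => ?_⟩
  obtain rfl | hHyp : y = p ∨ H.Adj y p := by tauto
  · exact hyq.2 hpq
  · exact hyq.1 (hH p y q hHyp.symm hpq)

end Complement

section Star

variable {u₀ : V} {S : Finset V}

theorem adjCouplable_excess_compl_starGraph_of_isolated (hu₀ : u₀ ∉ S)
    (hxy : (starGraph u₀ S)ᶜ.Adj x y) (hyS : y ∉ S) (hy : y ≠ u₀) :
    AdjCouplable (starGraph u₀ S)ᶜ (excess (starGraph u₀ S)ᶜ x y)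
      (excess (starGraph u₀ S)ᶜ y x) := by
  refine adjCouplable_excess_compl_of_isolated hxy (not_starGraph_adj_of_notMem hu₀ hyS hy)
    (if x ∈ S then S.erase x ×ˢ {u₀} else ∅) (fun p q hxq hqp hxp => ?_) ?_
  · rw [starGraph_adj hu₀] at hxq hqp
    rw [SimpleGraph.compl_adj] at hxp
    rcases hxq with ⟨rfl, hq⟩ | ⟨rfl, hxS⟩
    · rcases hqp with ⟨rfl, -⟩ | ⟨rfl, -⟩
      exacts [(hu₀ hq).elim, (hxp.1 rfl).elim]
    · have hpS : p ∈ S := by rcases hqp with ⟨-, hp⟩ | ⟨-, hq⟩; exacts [hp, (hu₀ hq).elim]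
      simp [hxS, hpS, Ne.symm hxp.1]
  · split_ifs with hxS
    · have hdeg : (starGraph u₀ S).degree x ≤ 1 := by
        rw [← SimpleGraph.card_neighborFinset_eq_degree, ← Finset.card_singleton u₀]
        refine Finset.card_le_card fun v hv => ?_
        rw [SimpleGraph.mem_neighborFinset, starGraph_adj hu₀] at hv
        rcases hv with ⟨rfl, hv⟩ | ⟨rfl, -⟩
        exacts [(hu₀ hxS).elim, Finset.mem_singleton_self _]
      have hS : #S ≤ Fintype.card V := Finset.card_le_univ S
      rw [Finset.card_product, Finset.card_erase_of_mem hxS, Finset.card_singleton, mul_one]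
      calc (#S - 1) * _ ≤ (#S - 1) * 1 := Nat.mul_le_mul_left _ hdeg
        _ ≤ Fintype.card V - 1 := by omega
    · simp

theorem adjCouplable_excess_compl_starGraph (hu₀ : u₀ ∉ S) (hxy : (starGraph u₀ S)ᶜ.Adj x y) :
    AdjCouplable (starGraph u₀ S)ᶜ (excess (starGraph u₀ S)ᶜ x y)
      (excess (starGraph u₀ S)ᶜ y x) := by
  by_cases hy : y ∉ S ∧ y ≠ u₀
  · exact adjCouplable_excess_compl_starGraph_of_isolated hu₀ hxy hy.1 hy.2
  by_cases hx : x ∉ S ∧ x ≠ u₀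
  · exact (adjCouplable_excess_compl_starGraph_of_isolated hu₀ hxy.symm hx.1 hx.2).symm
  have hxS : x ∈ S ∧ y ∈ S := by
    have := (SimpleGraph.compl_adj _ x y).1 hxy
    rw [starGraph_adj hu₀] at this
    grind
  have hleaf : ∀ x y : V, x ∈ S → y ∈ S → ∀ p, (starGraph u₀ S)ᶜ.Adj x p → p ≠ y →
      (starGraph u₀ S)ᶜ.Adj y p := by
    intro x y hx hy p hxp hpy
    simp only [SimpleGraph.compl_adj, starGraph_adj hu₀] at hxp ⊢
    grind
  rcases le_total (graphDeg _ y) (graphDeg _ x) with hdeg | hdeg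
  · exact adjCouplable_excess_of_neighbor_subset hxy hdeg (hleaf x y hxS.1 hxS.2)
  · exact (adjCouplable_excess_of_neighbor_subset hxy.symm hdeg (hleaf y x hxS.2 hxS.1)).symm

end Star

section Cycle

variable {m : ℕ} [Nontrivial (ZMod m)] {c : ZMod m → V}

lemma exists_eq_of_excess_compl_cycleThrough_ne_zero (hc : Function.Injective c) {i j : ZMod m}
    (hdeg : graphDeg (cycleThrough c)ᶜ (c j) ≤ graphDeg (cycleThrough c)ᶜ (c i)) {p : V}
    (hp : excess (cycleThrough c)ᶜ (c i) (c j) p ≠ 0) :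
    ∃ t, p = c t ∧ (t = j ∨ t = j + 1 ∨ j = t + 1) ∧ i ≠ t ∧ t ≠ i + 1 ∧ i ≠ t + 1 := by
  have hyp := not_adj_of_excess_ne_zero hdeg hp
  obtain ⟨t, rfl, ht⟩ : ∃ t, p = c t ∧ (t = j ∨ t = j + 1 ∨ j = t + 1) := by
    rw [SimpleGraph.compl_adj, not_and, not_not] at hyp
    by_cases hjp : c j = p
    · exact ⟨j, hjp.symm, Or.inl rfl⟩
    obtain ⟨t, rfl⟩ := mem_range_of_cycleThrough_adj (hyp hjp).symm
    exact ⟨t, rfl, Or.inr ((cycleThrough_adj_apply hc).1 (hyp hjp))⟩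
  exact ⟨t, rfl, ht, (compl_cycleThrough_adj_apply hc).1 (adj_of_excess_ne_zero hp)⟩

theorem adjCouplable_excess_compl_cycleThrough_apply (hc : Function.Injective c) {i j : ZMod m}
    (hxy : (cycleThrough c)ᶜ.Adj (c i) (c j)) :
    AdjCouplable (cycleThrough c)ᶜ (excess (cycleThrough c)ᶜ (c i) (c j))
      (excess (cycleThrough c)ᶜ (c j) (c i)) := by
  have hij := (compl_cycleThrough_adj_apply hc).1 hxy
  -- The rotation by `j - i` exchanges `c i` and `c j` only if `2 (j - i) = 0`; otherwise the
  -- reflection `t ↦ i + j - t` does, and its moves `p ↦ σ p` leave the edges only for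
  -- `p = c (j + 1)` when `j - i = -3` and for `p = c (j - 1)` when `j - i = 3`.
  by_cases h2 : (j - i) + (j - i) = 0
  · set σ := complCycleThroughAut hc _ (preservesCycleAdj_addRight (j - i))
    have hσ : ∀ t, σ (c t) = c (t + (j - i)) := complCycleThroughAut_apply hc _
    have hσi : σ (c i) = c j := by rw [hσ]; congr 1; abel
    have hdeg := (graphDeg_apply_iso σ (c i)).le
    rw [hσi] at hdeg
    refine adjCouplable_excess_of_iso σ hxy hσi (by rw [hσ]; congr 1; linear_combination h2)
      fun p hp p' hp' => ?_
    obtain ⟨t, rfl, ht, hit⟩ := exists_eq_of_excess_compl_cycleThrough_ne_zero hc hdeg hp.1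
    have hbad := hp.2
    rw [hσ, not_compl_cycleThrough_adj_apply_iff hc] at hbad
    grind
  · set σ := complCycleThroughAut hc _ (preservesCycleAdj_subLeft (i + j))
    have hσ : ∀ t, σ (c t) = c (i + j - t) := complCycleThroughAut_apply hc _
    have hσi : σ (c i) = c j := by rw [hσ]; congr 1; abel
    have hdeg := (graphDeg_apply_iso σ (c i)).le
    rw [hσi] at hdeg
    refine adjCouplable_excess_of_iso σ hxy hσi (by rw [hσ]; congr 1; abel)
      fun p hp p' hp' => ?_
    obtain ⟨t, rfl, ht, hit⟩ := exists_eq_of_excess_compl_cycleThrough_ne_zero hc hdeg hp.1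
    obtain ⟨t', rfl, ht', hit'⟩ := exists_eq_of_excess_compl_cycleThrough_ne_zero hc hdeg hp'.1
    have hbad := hp.2
    have hbad' := hp'.2
    rw [hσ, not_compl_cycleThrough_adj_apply_iff hc] at hbad hbad'
    congr 1
    grind

theorem adjCouplable_excess_compl_cycleThrough_of_notMem_range (hc : Function.Injective c)
    (hV : 5 ≤ Fintype.card V) (hxy : (cycleThrough c)ᶜ.Adj x y) (hy : y ∉ Set.range c) :
    AdjCouplable (cycleThrough c)ᶜ (excess (cycleThrough c)ᶜ x y)
      (excess (cycleThrough c)ᶜ y x) := by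
  have hyiso : ∀ v, ¬ (cycleThrough c).Adj y v := fun v h => hy (mem_range_of_cycleThrough_adj h)
  by_cases hx : x ∈ Set.range c
  · obtain ⟨i, rfl⟩ := hx
    refine adjCouplable_excess_compl_of_isolated hxy hyiso
      {(c (i + 2), c (i + 1)), (c (i - 2), c (i - 1))} (fun p q hxq hqp hxp => ?_) ?_
    · obtain ⟨t, rfl⟩ := mem_range_of_cycleThrough_adj hxq.symm
      obtain ⟨r, rfl⟩ := mem_range_of_cycleThrough_adj hqp.symm
      rw [cycleThrough_adj_apply hc] at hxq hqp
      rw [compl_cycleThrough_adj_apply hc] at hxp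
      simp only [Finset.mem_insert, Finset.mem_singleton, Prod.mk.injEq, hc.eq_iff]
      grind
    · have hdeg : (cycleThrough c).degree (c i) ≤ 2 := by
        rw [← SimpleGraph.card_neighborFinset_eq_degree]
        refine (Finset.card_le_card fun v hv => ?_).trans (Finset.card_le_two (a := c (i + 1))
          (b := c (i - 1)))
        rw [SimpleGraph.mem_neighborFinset] at hv
        obtain ⟨t, rfl⟩ := mem_range_of_cycleThrough_adj hv.symm
        rw [cycleThrough_adj_apply hc] at hv
        rcases hv with rfl | rfl
        · simp
        · simp
      have hs : #({(c (i + 2), c (i + 1)), (c (i - 2), c (i - 1))} : Finset (V × V)) ≤ 2 :=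
        Finset.card_le_two
      calc _ ≤ 2 * 2 := Nat.mul_le_mul hs hdeg
        _ ≤ Fintype.card V - 1 := by omega
  · refine adjCouplable_excess_compl_of_isolated hxy hyiso ∅
      (fun p q hxq _ _ => (hx (mem_range_of_cycleThrough_adj hxq)).elim) (by simp)

theorem adjCouplable_excess_compl_cycleThrough (hc : Function.Injective c)
    (hV : 5 ≤ Fintype.card V) (hxy : (cycleThrough c)ᶜ.Adj x y) :
    AdjCouplable (cycleThrough c)ᶜ (excess (cycleThrough c)ᶜ x y)
      (excess (cycleThrough c)ᶜ y x) := by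
  by_cases hy : y ∈ Set.range c
  · by_cases hx : x ∈ Set.range c
    · obtain ⟨i, rfl⟩ := hx
      obtain ⟨j, rfl⟩ := hy
      exact adjCouplable_excess_compl_cycleThrough_apply hc hxy
    · exact (adjCouplable_excess_compl_cycleThrough_of_notMem_range hc hV hxy.symm hx).symm
  · exact adjCouplable_excess_compl_cycleThrough_of_notMem_range hc hV hxy hy

end Cycle

lemma ricciCurv_eq_and_nonneg_of_adjCouplable (hxy : G.Adj x y)
    (h : AdjCouplable G (excess G x y) (excess G y x)) :
    ricciCurv G x y = triCount G x y / (max (graphDeg G x) (graphDeg G y) : ℝ) ∧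
      0 ≤ ricciCurv G x y := by
  rw [ricciCurv_eq_of_adjCouplable hxy h]
  exact ⟨rfl, by positivity⟩

theorem stmt18 :
    (∀ (n m : ℕ), 4 ≤ n → 1 ≤ m → m ≤ n / 2 →
      ∀ (M : Finset (Sym2 (Fin n))), IsMatchingSet M → M.card = m →
      ∀ (G : SimpleGraph (Fin n)), G = ⊤ \ SimpleGraph.fromEdgeSet ↑M →
      ∀ x y : Fin n, G.Adj x y →
        ricciCurv G x y =
          (triCount G x y : ℝ) / (max (graphDeg G x) (graphDeg G y) : ℝ) ∧
        0 ≤ ricciCurv G x y) ∧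
    (∀ (n m : ℕ), 4 ≤ n → 1 ≤ m → m ≤ n - 3 →
      ∀ (u₀ : Fin n) (S : Finset (Fin n)), u₀ ∉ S → S.card = m →
      ∀ (G : SimpleGraph (Fin n)),
        G = ⊤ \ SimpleGraph.fromEdgeSet {e | ∃ x ∈ S, e = s(u₀, x)} →
      ∀ x y : Fin n, G.Adj x y →
        ricciCurv G x y =
          (triCount G x y : ℝ) / (max (graphDeg G x) (graphDeg G y) : ℝ) ∧
        0 ≤ ricciCurv G x y) ∧
    (∀ (n m : ℕ), 6 ≤ n → 3 ≤ m → m ≤ n - 1 →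
      ∀ (c : ZMod m → Fin n), Function.Injective c →
      ∀ (G : SimpleGraph (Fin n)),
        G = ⊤ \ SimpleGraph.fromEdgeSet {e | ∃ i : ZMod m, e = s(c i, c (i + 1))} →
      ∀ x y : Fin n, G.Adj x y →
        ricciCurv G x y =
          (triCount G x y : ℝ) / (max (graphDeg G x) (graphDeg G y) : ℝ) ∧
        0 ≤ ricciCurv G x y) := by
  refine ⟨fun n m _ _ _ M hM _ G hG x y hxy => ?_, fun n m _ _ _ u₀ S hu₀ _ G hG x y hxy => ?_,
    fun n m hn hm _ c hc G hG x y hxy => ?_⟩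
  · rw [top_sdiff] at hG
    subst hG
    exact ricciCurv_eq_and_nonneg_of_adjCouplable hxy
      (adjCouplable_excess_compl_of_matching (fun _ _ _ => hM.eq_of_adj) hxy)
  · rw [top_sdiff] at hG
    subst hG
    exact ricciCurv_eq_and_nonneg_of_adjCouplable hxy
      (adjCouplable_excess_compl_starGraph (S := S) hu₀ hxy)
  · have : Nontrivial (ZMod m) := ZMod.nontrivial_iff.2 (by omega)
    rw [top_sdiff] at hG
    subst hG
    exact ricciCurv_eq_and_nonneg_of_adjCouplable hxy
      (adjCouplable_excess_compl_cycleThrough hc (by simp; omega) hxy)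
end
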